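/- arXiv:1803.09930 — 13 statements merged into one kernel-verified Lean document; each statement's English description precedes it below -/
import Mathlib

section
/- Friedgut's inequality: Let Q be a full conjunctive query with multi-hypergraph H = ([n], E) and finite input relations R_F for F ∈ E, and let δ = (δ_F)_{F∈E} be a fractional edge cover of H. For each F ∈ E let w_F : ∏_{i∈F} Dom(A_i) → ℝ≥0 be an arbitrary nonnegative weight function. Then ∑_{a ∈ Q} ∏_{F∈E} (w_F(a_F))^{δ_F} ≤ ∏_{F∈E} ( ∑_{t ∈ R_F} w_F(t) )^{δ_F}, where the convention 0^0 = 0 is used. -/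
open Finset

/-- Real power with the convention `0 ^ 0 = 0`. -/
noncomputable def rpow0 (x p : ℝ) : ℝ := if x = 0 then 0 else x ^ p

/-!
Sum out the coordinates one vertex at a time. For the partial sum over the coordinates in `s`
(the marginal), induction on `s` gives
`marginal_s (∏ w_e ^ δ_e) ≤ ∏ (marginal_{F_e ∩ s} w_e) ^ δ_e`: when a vertex `v` is peeled off,
the factors with `v ∉ F_e` do not depend on the value at `v`, and the remaining ones are handled
by Hölder's inequality for exponents summing to at least `1`, which is the cover condition at `v`.
Working in `ℝ≥0∞` with unconditional sums, infinite domains cost nothing. The convention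
`0 ^ 0 = 0` only matters when some relation has total weight `0`, and then every summand on the
left vanishes.
-/

open Function
open scoped ENNReal

namespace ENNReal

theorem tsum_prod_rpow_le_of_sum_eq_one {α ι : Type*} (s : Finset ι) (f : ι → α → ℝ≥0∞)
    {p : ι → ℝ} (hp : ∀ i ∈ s, 0 ≤ p i) (hsum : ∑ i ∈ s, p i = 1) :
    ∑' x, ∏ i ∈ s, f i x ^ p i ≤ ∏ i ∈ s, (∑' x, f i x) ^ p i := by
  let _ : MeasurableSpace α := ⊤
  simpa [MeasureTheory.lintegral_count] using
    lintegral_prod_norm_pow_le (μ := (.count : MeasureTheory.Measure α)) s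
      (fun i _ => measurable_from_top.aemeasurable) hsum hp

theorem prod_rpow_eq_prod_rpow_mul_prod_rpow_sub {ι : Type*} (s : Finset ι) (g : ι → ℝ≥0∞)
    {p q : ι → ℝ} (hq : ∀ i ∈ s, 0 ≤ q i) (hqp : ∀ i ∈ s, q i ≤ p i) :
    ∏ i ∈ s, g i ^ p i = (∏ i ∈ s, g i ^ q i) * ∏ i ∈ s, g i ^ (p i - q i) := by
  rw [← prod_mul_distrib]
  refine prod_congr rfl fun i hi => ?_
  rw [← rpow_add_of_nonneg _ _ (hq i hi) (sub_nonneg.2 (hqp i hi)), add_sub_cancel]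

/-- The exponents are lowered to `p i / σ`, which sum to `1`; the surplus factors
`f i x ^ (p i - p i / σ)` are bounded by the same powers of the total sums. -/
theorem tsum_prod_rpow_le {α ι : Type*} (s : Finset ι) (f : ι → α → ℝ≥0∞)
    {p : ι → ℝ} (hp : ∀ i ∈ s, 0 ≤ p i) (hsum : 1 ≤ ∑ i ∈ s, p i) :
    ∑' x, ∏ i ∈ s, f i x ^ p i ≤ ∏ i ∈ s, (∑' x, f i x) ^ p i := by
  set σ := ∑ i ∈ s, p i
  have hσ : 0 < σ := one_pos.trans_le hsum
  have hq : ∀ i ∈ s, 0 ≤ p i / σ := fun i hi => div_nonneg (hp i hi) hσ.le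
  have hqp : ∀ i ∈ s, p i / σ ≤ p i := fun i hi => div_le_self (hp i hi) hsum
  have hqsum : ∑ i ∈ s, p i / σ = 1 := by rw [← sum_div, div_self hσ.ne']
  calc ∑' x, ∏ i ∈ s, f i x ^ p i
      = ∑' x, (∏ i ∈ s, f i x ^ (p i / σ)) * ∏ i ∈ s, f i x ^ (p i - p i / σ) := by
        simp_rw [prod_rpow_eq_prod_rpow_mul_prod_rpow_sub s _ hq hqp]
    _ ≤ ∑' x, (∏ i ∈ s, f i x ^ (p i / σ)) * ∏ i ∈ s, (∑' y, f i y) ^ (p i - p i / σ) := by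
        gcongr with x i hi
        · exact sub_nonneg.2 (hqp i hi)
        · exact ENNReal.le_tsum x
    _ = (∑' x, ∏ i ∈ s, f i x ^ (p i / σ)) * ∏ i ∈ s, (∑' y, f i y) ^ (p i - p i / σ) :=
        ENNReal.tsum_mul_right
    _ ≤ (∏ i ∈ s, (∑' x, f i x) ^ (p i / σ)) * ∏ i ∈ s, (∑' y, f i y) ^ (p i - p i / σ) := by
        gcongr
        exact tsum_prod_rpow_le_of_sum_eq_one s f hq hqsum
    _ = ∏ i ∈ s, (∑' x, f i x) ^ p i := (prod_rpow_eq_prod_rpow_mul_prod_rpow_sub s _ hq hqp).symm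

theorem ofReal_prod_rpow {ι : Type*} (s : Finset ι) {f δ : ι → ℝ}
    (hf : ∀ i ∈ s, 0 ≤ f i) (hδ : ∀ i ∈ s, 0 ≤ δ i) :
    ENNReal.ofReal (∏ i ∈ s, f i ^ δ i) = ∏ i ∈ s, ENNReal.ofReal (f i) ^ δ i := by
  rw [ofReal_prod_of_nonneg fun i hi => Real.rpow_nonneg (hf i hi) _]
  exact prod_congr rfl fun i hi => (ofReal_rpow_of_nonneg (hf i hi) (hδ i hi)).symm

end ENNReal

section TsumMarginal

variable {V : Type*} [DecidableEq V] {X : V → Type*}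

/-- The analogue of `MeasureTheory.lmarginal` for counting measures, which need not be
σ-finite here. -/
noncomputable def tsumMarginal (s : Finset V) (f : (∀ i, X i) → ℝ≥0∞) (x : ∀ i, X i) : ℝ≥0∞ :=
  ∑' y : (∀ i : s, X i), f (updateFinset x s y)

@[simp]
theorem tsumMarginal_empty (f : (∀ i, X i) → ℝ≥0∞) (x : ∀ i, X i) :
    tsumMarginal ∅ f x = f x := by
  simp [tsumMarginal]

theorem tsumMarginal_union {s t : Finset V} (hst : Disjoint s t) (f : (∀ i, X i) → ℝ≥0∞)
    (x : ∀ i, X i) : tsumMarginal (s ∪ t) f x = tsumMarginal s (tsumMarginal t f) x := by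
  simp only [tsumMarginal, updateFinset_updateFinset hst, ← ENNReal.tsum_prod]
  exact ((Equiv.piFinsetUnion X hst).tsum_eq _).symm

theorem tsumMarginal_singleton (v : V) (f : (∀ i, X i) → ℝ≥0∞) (x : ∀ i, X i) :
    tsumMarginal {v} f x = ∑' t, f (update x v t) := by
  rw [tsumMarginal, ← (Equiv.piUnique _).symm.tsum_eq]
  simp [update_eq_updateFinset]

theorem tsumMarginal_insert {v : V} {s : Finset V} (hv : v ∉ s) (f : (∀ i, X i) → ℝ≥0∞)
    (x : ∀ i, X i) : tsumMarginal (insert v s) f x = ∑' t, tsumMarginal s f (update x v t) := by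
  rw [insert_eq, tsumMarginal_union (disjoint_singleton_left.2 hv), tsumMarginal_singleton]

theorem tsumMarginal_univ [Fintype V] (f : (∀ i, X i) → ℝ≥0∞) (x : ∀ i, X i) :
    tsumMarginal univ f x = ∑' a, f a := by
  simp only [tsumMarginal, updateFinset_univ]
  let e : (∀ i : (univ : Finset V), X i) ≃ ∀ i, X i :=
    ⟨fun y i => y ⟨i, mem_univ i⟩, fun a i => a i, fun _ => rfl, fun _ => rfl⟩
  exact e.tsum_eq f

theorem tsumMarginal_restrict (s : Finset V) (g : (∀ i : s, X i) → ℝ≥0∞) (x : ∀ i, X i) :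
    tsumMarginal s (fun a => g (s.restrict a)) x = ∑' y, g y := by
  simp only [tsumMarginal, restrict_updateFinset]

theorem DependsOn.tsumMarginal {f : (∀ i, X i) → ℝ≥0∞} {s : Set V} (hf : DependsOn f s)
    (t : Finset V) : DependsOn (tsumMarginal t f) s :=
  fun _ _ h => tsum_congr fun y => (hf.updateFinset y).mono Set.sdiff_subset h

end TsumMarginal

section Friedgut

variable {V : Type*} [DecidableEq V] {X : V → Type*} {ι : Type*} [Fintype ι]

theorem tsumMarginal_prod_rpow_le (F : ι → Finset V) (w : ι → (∀ i, X i) → ℝ≥0∞)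
    (hw : ∀ e, DependsOn (w e) (F e)) {δ : ι → ℝ} (hδ : ∀ e, 0 ≤ δ e) (s : Finset V)
    (hcover : ∀ v ∈ s, 1 ≤ ∑ e ∈ univ.filter (fun e => v ∈ F e), δ e) (x : ∀ i, X i) :
    tsumMarginal s (fun a => ∏ e, w e a ^ δ e) x ≤
      ∏ e, tsumMarginal (F e ∩ s) (w e) x ^ δ e := by
  induction s using Finset.induction_on generalizing x with
  | empty => simp
  | @insert v s hv ih =>
    set M := fun e => tsumMarginal (F e ∩ s) (w e)
    have hM : ∀ e, v ∉ F e → ∀ t, M e (update x v t) = M e x := fun e hvF t =>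
      (hw e).tsumMarginal _ fun i hi => update_of_ne (ne_of_mem_of_not_mem hi hvF) _ _
    have hMv : ∀ e, v ∈ F e →
        tsumMarginal (F e ∩ insert v s) (w e) x = ∑' t, M e (update x v t) := fun e hvF => by
      rw [inter_insert_of_mem hvF, tsumMarginal_insert fun h => hv (mem_inter.1 h).2]
    calc tsumMarginal (insert v s) (fun a => ∏ e, w e a ^ δ e) x
        = ∑' t, tsumMarginal s (fun a => ∏ e, w e a ^ δ e) (update x v t) :=
          tsumMarginal_insert hv _ x
      _ ≤ ∑' t, ∏ e, M e (update x v t) ^ δ e :=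
          ENNReal.tsum_le_tsum fun t => ih (fun u hu => hcover u (mem_insert_of_mem hu)) _
      _ = ∑' t, (∏ e ∈ univ.filter (fun e => v ∈ F e), M e (update x v t) ^ δ e) *
            ∏ e ∈ univ.filter (fun e => v ∉ F e), M e x ^ δ e := by
          refine tsum_congr fun t => ?_
          rw [← prod_filter_mul_prod_filter_not univ (fun e => v ∈ F e)]
          congr 1
          exact prod_congr rfl fun e he => by rw [hM e (mem_filter.1 he).2]
      _ = (∑' t, ∏ e ∈ univ.filter (fun e => v ∈ F e), M e (update x v t) ^ δ e) *
            ∏ e ∈ univ.filter (fun e => v ∉ F e), M e x ^ δ e := ENNReal.tsum_mul_right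
      _ ≤ (∏ e ∈ univ.filter (fun e => v ∈ F e), (∑' t, M e (update x v t)) ^ δ e) *
            ∏ e ∈ univ.filter (fun e => v ∉ F e), M e x ^ δ e := by
          gcongr
          exact ENNReal.tsum_prod_rpow_le _ _ (fun e _ => hδ e) (hcover v (mem_insert_self v s))
      _ = ∏ e, tsumMarginal (F e ∩ insert v s) (w e) x ^ δ e := by
          rw [← prod_filter_mul_prod_filter_not univ (fun e => v ∈ F e)]
          congr 1
          · exact prod_congr rfl fun e he => by rw [hMv e (mem_filter.1 he).2]
          · exact prod_congr rfl fun e he => by rw [inter_insert_of_notMem (mem_filter.1 he).2]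

theorem tsum_prod_rpow_restrict_le [Fintype V] (F : ι → Finset V)
    (g : ∀ e, (∀ i : F e, X i) → ℝ≥0∞) {δ : ι → ℝ} (hδ : ∀ e, 0 ≤ δ e)
    (hcover : ∀ v, 1 ≤ ∑ e ∈ univ.filter (fun e => v ∈ F e), δ e) :
    ∑' a, ∏ e, g e ((F e).restrict a) ^ δ e ≤ ∏ e, (∑' t, g e t) ^ δ e := by
  rcases isEmpty_or_nonempty (∀ i, X i) with hX | ⟨⟨x⟩⟩
  · simp
  simpa [tsumMarginal_univ, tsumMarginal_restrict] using
    tsumMarginal_prod_rpow_le F (fun e a => g e ((F e).restrict a))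
      (fun e _ _ h => congrArg (g e) ((F e).dependsOn_restrict h)) hδ univ (fun v _ => hcover v) x

theorem sum_prod_rpow_restrict_le [Fintype V] (F : ι → Finset V)
    (R : ∀ e, Finset (∀ i : F e, X i)) (w : ∀ e, (∀ i : F e, X i) → ℝ) (hw : ∀ e t, 0 ≤ w e t)
    {δ : ι → ℝ} (hδ : ∀ e, 0 ≤ δ e)
    (hcover : ∀ v, 1 ≤ ∑ e ∈ univ.filter (fun e => v ∈ F e), δ e)
    (Q : Finset (∀ i, X i)) (hQ : ∀ a ∈ Q, ∀ e, (F e).restrict a ∈ R e) :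
    ∑ a ∈ Q, ∏ e, w e ((F e).restrict a) ^ δ e ≤ ∏ e, (∑ t ∈ R e, w e t) ^ δ e := by
  let g e := (R e : Set _).indicator fun t => ENNReal.ofReal (w e t)
  have hg : ∀ e, ∑' t, g e t = ENNReal.ofReal (∑ t ∈ R e, w e t) := fun e => by
    simp only [g]
    rw [← sum_eq_tsum_indicator, ENNReal.ofReal_sum_of_nonneg fun t _ => hw e t]
  refine (ENNReal.ofReal_le_ofReal_iff
    (prod_nonneg fun e _ => Real.rpow_nonneg (sum_nonneg fun t _ => hw e t) _)).1 ?_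
  calc ENNReal.ofReal (∑ a ∈ Q, ∏ e, w e ((F e).restrict a) ^ δ e)
      = ∑ a ∈ Q, ∏ e, g e ((F e).restrict a) ^ δ e := by
        rw [ENNReal.ofReal_sum_of_nonneg fun a _ =>
          prod_nonneg fun e _ => Real.rpow_nonneg (hw e _) _]
        refine sum_congr rfl fun a ha => ?_
        rw [ENNReal.ofReal_prod_rpow _ (fun e _ => hw e _) fun e _ => hδ e]
        exact prod_congr rfl fun e _ => by
          simp only [g, Set.indicator_of_mem (mem_coe.2 (hQ a ha e))]
    _ ≤ ∑' a, ∏ e, g e ((F e).restrict a) ^ δ e := ENNReal.sum_le_tsum Q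
    _ ≤ ∏ e, (∑' t, g e t) ^ δ e := tsum_prod_rpow_restrict_le F g hδ hcover
    _ = ENNReal.ofReal (∏ e, (∑ t ∈ R e, w e t) ^ δ e) := by
        rw [ENNReal.ofReal_prod_rpow _ (fun e _ => sum_nonneg fun t _ => hw e t) fun e _ => hδ e]
        simp only [hg]

end Friedgut

theorem rpow0_nonneg {x : ℝ} (hx : 0 ≤ x) (p : ℝ) : 0 ≤ rpow0 x p := by
  unfold rpow0
  split_ifs
  exacts [le_rfl, Real.rpow_nonneg hx p]

theorem rpow0_le_rpow {x : ℝ} (hx : 0 ≤ x) (p : ℝ) : rpow0 x p ≤ x ^ p := by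
  unfold rpow0
  split_ifs
  exacts [Real.rpow_nonneg hx p, le_rfl]

theorem friedgut_inequality_general
    {n : ℕ} (Dom : Fin n → Type*)
    {ι : Type*} [Fintype ι]
    (F : ι → Finset (Fin n))
    (R : (e : ι) → Finset ((i : {x // x ∈ F e}) → Dom i.val))
    (δ : ι → ℝ) (hδ : ∀ e, 0 ≤ δ e)
    (hcover : ∀ v : Fin n, 1 ≤ ∑ e ∈ Finset.univ.filter (fun e => v ∈ F e), δ e)
    (w : (e : ι) → (((i : {x // x ∈ F e}) → Dom i.val) → ℝ))
    (hw : ∀ e t, 0 ≤ w e t)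
    (Q : Finset (∀ i, Dom i))
    (hQ : ∀ a : ∀ i, Dom i, a ∈ Q ↔ ∀ e : ι, (fun i : {x // x ∈ F e} => a i.val) ∈ R e) :
    ∑ a ∈ Q, ∏ e : ι, rpow0 (w e (fun i : {x // x ∈ F e} => a i.val)) (δ e)
      ≤ ∏ e : ι, rpow0 (∑ t ∈ R e, w e t) (δ e) := by
  by_cases hzero : ∃ e, ∑ t ∈ R e, w e t = 0
  · obtain ⟨e₀, he₀⟩ := hzero
    have hvanish : ∀ a ∈ Q, ∏ e, rpow0 (w e ((F e).restrict a)) (δ e) = 0 := fun a ha =>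
      prod_eq_zero (mem_univ e₀) <|
        if_pos <| (sum_eq_zero_iff_of_nonneg fun t _ => hw e₀ t).1 he₀ _ ((hQ a).1 ha e₀)
    exact (sum_eq_zero hvanish).trans_le
      (prod_nonneg fun e _ => rpow0_nonneg (sum_nonneg fun t _ => hw e t) _)
  rw [not_exists] at hzero
  calc ∑ a ∈ Q, ∏ e, rpow0 (w e ((F e).restrict a)) (δ e)
      ≤ ∑ a ∈ Q, ∏ e, w e ((F e).restrict a) ^ δ e :=
        sum_le_sum fun a _ => prod_le_prod (fun e _ => rpow0_nonneg (hw e _) _)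
          fun e _ => rpow0_le_rpow (hw e _) _
    _ ≤ ∏ e, (∑ t ∈ R e, w e t) ^ δ e :=
        sum_prod_rpow_restrict_le F R w hw hδ hcover Q fun a ha => (hQ a).1 ha
    _ = ∏ e, rpow0 (∑ t ∈ R e, w e t) (δ e) := by simp only [rpow0, if_neg (hzero _)]

/-- **Friedgut's inequality.** Given a full conjunctive query with multi-hypergraph
`([n], E)` (edges indexed by `ι`), finite relations `R e`, a fractional edge cover `δ`,
and nonnegative weight functions `w e`, the weighted output sum is bounded by the
product of the weighted relation sums, using the convention `0 ^ 0 = 0`. -/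
theorem friedgut_inequality
    {n : ℕ} (hn : 1 ≤ n) (Dom : Fin n → Type*)
    {ι : Type*} [Fintype ι]
    (F : ι → Finset (Fin n))
    (hFne : ∀ e : ι, (F e).Nonempty)
    (R : (e : ι) → Finset ((i : {x // x ∈ F e}) → Dom i.val))
    (δ : ι → ℝ) (hδ : ∀ e, 0 ≤ δ e)
    (hcover : ∀ v : Fin n, 1 ≤ ∑ e ∈ Finset.univ.filter (fun e => v ∈ F e), δ e)
    (w : (e : ι) → (((i : {x // x ∈ F e}) → Dom i.val) → ℝ))
    (hw : ∀ e t, 0 ≤ w e t)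
    (Q : Finset (∀ i, Dom i))
    (hQ : ∀ a : ∀ i, Dom i, a ∈ Q ↔ ∀ e : ι, (fun i : {x // x ∈ F e} => a i.val) ∈ R e) :
    ∑ a ∈ Q, ∏ e : ι, rpow0 (w e (fun i : {x // x ∈ F e} => a i.val)) (δ e)
      ≤ ∏ e : ι, rpow0 (∑ t ∈ R e, w e t) (δ e) :=
  friedgut_inequality_general Dom F R δ hδ hcover w hw Q hQ
end

section
/- AGM bound: Let Q be a full conjunctive query with multi-hypergraph H = ([n], E) and finite input relations R_F for F ∈ E, and let δ = (δ_F)_{F∈E} be a fractional edge cover of H. Then |Q| ≤ ∏_{F∈E} |R_F|^{δ_F}. -/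
open Finset ENNReal MeasureTheory

lemma AGM.tsum_holder {α : Type*} {ι : Type*} (s : Finset ι) (f : ι → α → ℝ≥0∞)
    (p : ι → ℝ) (hp : ∑ i ∈ s, p i = 1) (h2p : ∀ i ∈ s, 0 ≤ p i) :
    ∑' a, ∏ i ∈ s, f i a ^ p i ≤ ∏ i ∈ s, (∑' a, f i a) ^ p i := by
  letI : MeasurableSpace α := ⊤
  haveI : MeasurableSingletonClass α := ⟨fun _ => trivial⟩
  have h := ENNReal.lintegral_prod_norm_pow_le (μ := (Measure.count : Measure α)) s
    (f := f) (fun i _ => Measurable.aemeasurable (fun _ _ => trivial)) hp h2p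
  simpa [MeasureTheory.lintegral_count] using h

lemma AGM.tsum_rpow_le {α : Type*} (g : α → ℝ≥0∞) {c : ℝ} (hc : 1 ≤ c) :
    (∑' x, g x ^ c) ^ (1/c) ≤ ∑' x, g x := by
  have hc0 : 0 < c := lt_of_lt_of_le one_pos hc
  set S := ∑' x, g x with hS
  rcases eq_top_or_lt_top S with h | hfin
  · simp [h]
  rcases eq_or_ne S 0 with h0 | h0
  · have : ∀ x, g x = 0 := by
      intro x
      have := ENNReal.le_tsum (f := g) x
      simpa [← hS, h0] using this
    simp [this, ENNReal.zero_rpow_of_pos hc0, one_div,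
      ENNReal.zero_rpow_of_pos (inv_pos.mpr hc0)]
  · have hb : ∑' x, g x ^ c ≤ S ^ c := by
      have : ∀ x, g x ^ c ≤ g x * S ^ (c - 1) := by
        intro x
        have h1 : g x ^ c = g x ^ (1 + (c-1)) := by ring_nf
        rw [h1, ENNReal.rpow_add_of_nonneg _ _ zero_le_one (by linarith)]
        rw [ENNReal.rpow_one]
        exact mul_le_mul_right (ENNReal.rpow_le_rpow (ENNReal.le_tsum x) (by linarith)) _
      calc ∑' x, g x ^ c ≤ ∑' x, g x * S ^ (c-1) := ENNReal.tsum_le_tsum this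
        _ = S * S ^ (c-1) := by rw [ENNReal.tsum_mul_right]
        _ = S ^ c := by
            have h2 : S * S ^ (c-1) = S ^ (1 + (c-1)) := by
              rw [ENNReal.rpow_add _ _ h0 hfin.ne, ENNReal.rpow_one]
            rw [h2]; ring_nf
    calc (∑' x, g x ^ c) ^ (1/c) ≤ (S ^ c) ^ (1/c) :=
          ENNReal.rpow_le_rpow hb (by positivity)
      _ = S := by rw [← ENNReal.rpow_mul]; rw [mul_one_div, div_self hc0.ne', ENNReal.rpow_one]

section equivs
variable {V : Type u} [DecidableEq V] (Dom : V → Type v) (v : V)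
def AGM.E0 : (∀ i, Dom i) ≃ (Dom v × ∀ j : {x : V // x ≠ v}, Dom j.1) where
  toFun a := (a v, fun j => a j.1)
  invFun q i := if h : i = v then cast (congrArg Dom h.symm) q.1 else q.2 ⟨i, h⟩
  left_inv a := by
    funext i
    by_cases h : i = v
    · subst h; simp
    · simp [h]
  right_inv q := by
    refine Prod.ext ?_ ?_
    · simp
    · funext j
      exact dif_neg j.2
variable {S : Finset V}
def AGM.eL (hv : v ∈ S) :
    ((i : {x // x ∈ S}) → Dom i.1) ≃
      (Dom v × ((j : {y : {x : V // x ≠ v} // y ∈ S.subtype (· ≠ v)}) → Dom j.1.1)) where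
  toFun t := (t ⟨v, hv⟩, fun j => t ⟨j.1.1, Finset.mem_subtype.mp j.2⟩)
  invFun q i := if h : i.1 = v then cast (congrArg Dom h.symm) q.1
    else q.2 ⟨⟨i.1, h⟩, Finset.mem_subtype.mpr i.2⟩
  left_inv t := by
    funext i
    by_cases h : i.1 = v
    · obtain ⟨iv, hi⟩ := i
      dsimp at h
      subst h
      simp
    · exact dif_neg h
  right_inv q := by
    refine Prod.ext ?_ ?_
    · simp
    · funext j
      exact dif_neg j.1.2
def AGM.eN (hv : v ∉ S) :
    (((j : {y : {x : V // x ≠ v} // y ∈ S.subtype (· ≠ v)}) → Dom j.1.1)) ≃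
      ((i : {x // x ∈ S}) → Dom i.1) where
  toFun u i := u ⟨⟨i.1, fun h => hv (h ▸ i.2)⟩, Finset.mem_subtype.mpr i.2⟩
  invFun t j := t ⟨j.1.1, Finset.mem_subtype.mp j.2⟩
  left_inv _ := rfl
  right_inv _ := rfl
end equivs

lemma AGM.main {ι : Type*} [Fintype ι] (δ : ι → ℝ) (hδ : ∀ e, 0 ≤ δ e) :
    ∀ (n : ℕ) (V : Type u) [Fintype V] [DecidableEq V], Fintype.card V = n →
    ∀ (Dom : V → Type v) (F : ι → Finset V)
      (f : (e : ι) → ((i : {x // x ∈ F e}) → Dom i.val) → ℝ≥0∞),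
      (∀ w : V, 1 ≤ ∑ e ∈ Finset.univ.filter (fun e => w ∈ F e), δ e) →
      ∑' a : ∀ i, Dom i, ∏ e, f e (fun i => a i.val) ^ δ e ≤ ∏ e, (∑' t, f e t) ^ δ e := by
  intro n
  induction n with
  | zero =>
    intro V _ _ hV Dom F f _
    haveI : IsEmpty V := Fintype.card_eq_zero_iff.mp hV
    haveI : Unique (∀ i, Dom i) :=
      ⟨⟨fun i => (IsEmpty.false i).elim⟩, fun a => funext fun i => (IsEmpty.false i).elim⟩
    rw [tsum_eq_single default (fun b hb => absurd (Subsingleton.elim b default) hb)]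
    exact Finset.prod_le_prod' fun e _ =>
      ENNReal.rpow_le_rpow (ENNReal.le_tsum _) (hδ e)
  | succ n ih =>
    intro V _ _ hV Dom F f hcover
    have hpos : 0 < Fintype.card V := by omega
    obtain ⟨v⟩ := Fintype.card_pos_iff.mp hpos
    set L : Finset ι := Finset.univ.filter (fun e => v ∈ F e) with hLdef
    set c : ℝ := ∑ e ∈ L, δ e with hcdef
    have hc1 : (1 : ℝ) ≤ c := hcover v
    have hc0 : c ≠ 0 := by linarith
    have hcard : Fintype.card {x : V // x ≠ v} = n := by
      have := Fintype.card_subtype_compl (fun x : V => x = v)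
      simp only [Fintype.card_subtype_eq] at this
      have h2 : Fintype.card {x : V // x ≠ v} = Fintype.card V - 1 := this
      omega
    -- new data
    set F' : ι → Finset {x : V // x ≠ v} := fun e => (F e).subtype (· ≠ v) with hF'def
    set f' : (e : ι) → ((j : {y // y ∈ F' e}) → Dom j.1.1) → ℝ≥0∞ := fun e =>
      if hv : v ∈ F e then
        (fun u => (∑' x : Dom v, f e ((AGM.eL Dom v hv).symm (x, u)) ^ c) ^ (1/c))
      else (fun u => f e (AGM.eN Dom v hv u)) with hf'def
    have hcover' : ∀ w : {x : V // x ≠ v},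
        1 ≤ ∑ e ∈ Finset.univ.filter (fun e => w ∈ F' e), δ e := by
      intro w
      have hfilter : Finset.univ.filter (fun e => w ∈ F' e)
          = Finset.univ.filter (fun e => w.1 ∈ F e) := by
        apply Finset.filter_congr
        intro e _
        simp [hF'def, Finset.mem_subtype]
      rw [hfilter]
      exact hcover w.1
    have IH := ih {x : V // x ≠ v} hcard (fun j => Dom j.1) F' f' hcover'
    -- pointwise claims
    have claim1 : ∀ (b : ∀ j : {x : V // x ≠ v}, Dom j.1) (e : ι) (hv : v ∈ F e) (x : Dom v),
        (fun i : {y // y ∈ F e} => ((AGM.E0 Dom v).symm (x, b)) i.1)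
          = (AGM.eL Dom v hv).symm (x, fun j => b j.1) := by
      intro b e hv x
      rfl
    have claim2 : ∀ (b : ∀ j : {x : V // x ≠ v}, Dom j.1) (e : ι) (hv : v ∉ F e) (x : Dom v),
        (fun i : {y // y ∈ F e} => ((AGM.E0 Dom v).symm (x, b)) i.1)
          = AGM.eN Dom v hv (fun j => b j.1) := by
      intro b e hv x
      funext i
      exact dif_neg (fun h : (i.1 : V) = v => hv (h ▸ i.2))
    -- rewrite LHS as double sum
    have hA : ∑' a : ∀ i, Dom i, ∏ e, f e (fun i => a i.1) ^ δ e
        = ∑' (b : ∀ j : {x : V // x ≠ v}, Dom j.1) (x : Dom v),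
            ∏ e, f e (fun i => ((AGM.E0 Dom v).symm (x, b)) i.1) ^ δ e := by
      rw [← Equiv.tsum_eq (AGM.E0 Dom v).symm (fun a => ∏ e, f e (fun i => a i.1) ^ δ e)]
      rw [ENNReal.tsum_prod']
      exact ENNReal.tsum_comm
    rw [hA]
    -- bound the inner sum for each b
    have key : ∀ b : ∀ j : {x : V // x ≠ v}, Dom j.1,
        (∑' x : Dom v, ∏ e, f e (fun i => ((AGM.E0 Dom v).symm (x, b)) i.1) ^ δ e)
          ≤ ∏ e, f' e (fun j => b j.1) ^ δ e := by
      intro b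
      set g : ι → Dom v → ℝ≥0∞ :=
        fun e x => f e (fun i => ((AGM.E0 Dom v).symm (x, b)) i.1) with hgdef
      have hC : ∀ x : Dom v, ∏ e ∈ Finset.univ.filter (fun e => ¬ v ∈ F e), g e x ^ δ e
          = ∏ e ∈ Finset.univ.filter (fun e => ¬ v ∈ F e), f' e (fun j => b j.1) ^ δ e := by
        intro x
        refine Finset.prod_congr rfl fun e he => ?_
        have hv : v ∉ F e := (Finset.mem_filter.mp he).2
        rw [hgdef]
        simp only [claim2 b e hv x, hf'def, dif_neg hv]
        rfl
      have hcnn : (0:ℝ) ≤ c := by linarith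
      calc ∑' x : Dom v, ∏ e, g e x ^ δ e
          = ∑' x : Dom v, (∏ e ∈ L, g e x ^ δ e)
              * ∏ e ∈ Finset.univ.filter (fun e => ¬ v ∈ F e), f' e (fun j => b j.1) ^ δ e := by
            refine tsum_congr fun x => ?_
            rw [← hC x, hLdef]
            exact (Finset.prod_filter_mul_prod_filter_not Finset.univ _ _).symm
        _ = (∑' x : Dom v, ∏ e ∈ L, g e x ^ δ e)
              * ∏ e ∈ Finset.univ.filter (fun e => ¬ v ∈ F e), f' e (fun j => b j.1) ^ δ e :=
            ENNReal.tsum_mul_right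
        _ ≤ (∏ e ∈ L, (∑' x : Dom v, g e x ^ c) ^ (δ e / c))
              * ∏ e ∈ Finset.univ.filter (fun e => ¬ v ∈ F e), f' e (fun j => b j.1) ^ δ e := by
            refine mul_le_mul_left ?_ _
            have hpt : ∀ x : Dom v, ∏ e ∈ L, g e x ^ δ e
                = ∏ e ∈ L, (g e x ^ c) ^ (δ e / c) := by
              intro x
              refine Finset.prod_congr rfl fun e _ => ?_
              rw [← ENNReal.rpow_mul]
              congr 1
              field_simp
            rw [funext hpt]
            exact AGM.tsum_holder L (fun e x => g e x ^ c) (fun e => δ e / c)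
              (by rw [← Finset.sum_div, ← hcdef, div_self hc0])
              (fun e _ => div_nonneg (hδ e) hcnn)
        _ = (∏ e ∈ L, f' e (fun j => b j.1) ^ δ e)
              * ∏ e ∈ Finset.univ.filter (fun e => ¬ v ∈ F e), f' e (fun j => b j.1) ^ δ e := by
            congr 1
            refine Finset.prod_congr rfl fun e he => ?_
            rw [hLdef] at he
            have hv : v ∈ F e := (Finset.mem_filter.mp he).2
            have hg : ∀ x, g e x = f e ((AGM.eL Dom v hv).symm (x, fun j => b j.1)) := by
              intro x
              rw [hgdef]
              exact congrArg (f e) (claim1 b e hv x)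
            simp only [hg, hf'def, dif_pos hv]
            rw [show δ e / c = (1/c) * δ e by ring, ENNReal.rpow_mul]
        _ = ∏ e, f' e (fun j => b j.1) ^ δ e := by
            rw [hLdef]
            exact Finset.prod_filter_mul_prod_filter_not Finset.univ _ _
    calc ∑' (b : ∀ j : {x : V // x ≠ v}, Dom j.1) (x : Dom v),
            ∏ e, f e (fun i => ((AGM.E0 Dom v).symm (x, b)) i.1) ^ δ e
        ≤ ∑' (b : ∀ j : {x : V // x ≠ v}, Dom j.1), ∏ e, f' e (fun j => b j.1) ^ δ e :=
          ENNReal.tsum_le_tsum key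
      _ ≤ ∏ e, (∑' t, f' e t) ^ δ e := IH
      _ ≤ ∏ e, (∑' t, f e t) ^ δ e := by
          refine Finset.prod_le_prod' fun e _ => ENNReal.rpow_le_rpow ?_ (hδ e)
          by_cases hv : v ∈ F e
          · calc ∑' u, f' e u
                = ∑' u, (∑' x : Dom v, f e ((AGM.eL Dom v hv).symm (x, u)) ^ c) ^ (1/c) := by
                  simp only [hf'def, dif_pos hv]
                  rfl
              _ ≤ ∑' u, ∑' x : Dom v, f e ((AGM.eL Dom v hv).symm (x, u)) :=
                  ENNReal.tsum_le_tsum fun u => AGM.tsum_rpow_le _ hc1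
              _ = ∑' (x : Dom v) (u), f e ((AGM.eL Dom v hv).symm (x, u)) := ENNReal.tsum_comm
              _ = ∑' q : Dom v × _, f e ((AGM.eL Dom v hv).symm q) := (ENNReal.tsum_prod' (f := fun q => f e ((AGM.eL Dom v hv).symm q))).symm
              _ = ∑' t, f e t := Equiv.tsum_eq (AGM.eL Dom v hv).symm _
          · refine le_of_eq ?_
            calc ∑' u, f' e u = ∑' u, f e (AGM.eN Dom v hv u) := by
                  simp only [hf'def, dif_neg hv]
                  rfl
              _ = ∑' t, f e t := Equiv.tsum_eq (AGM.eN Dom v hv) _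


/-- **AGM bound.** Given a full conjunctive query with multi-hypergraph `([n], E)`
(edges indexed by `ι`), finite relations `R e`, and a fractional edge cover `δ`,
the output size is bounded by `∏_F |R_F| ^ δ_F`. -/
theorem agm_bound
    {n : ℕ} (hn : 1 ≤ n) (Dom : Fin n → Type*)
    {ι : Type*} [Fintype ι]
    (F : ι → Finset (Fin n))
    (hFne : ∀ e : ι, (F e).Nonempty)
    (R : (e : ι) → Finset ((i : {x // x ∈ F e}) → Dom i.val))
    (δ : ι → ℝ) (hδ : ∀ e, 0 ≤ δ e)
    (hcover : ∀ v : Fin n, 1 ≤ ∑ e ∈ Finset.univ.filter (fun e => v ∈ F e), δ e)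
    (Q : Finset (∀ i, Dom i))
    (hQ : ∀ a : ∀ i, Dom i, a ∈ Q ↔ ∀ e : ι, (fun i : {x // x ∈ F e} => a i.val) ∈ R e) :
    (Q.card : ℝ) ≤ ∏ e : ι, ((R e).card : ℝ) ^ (δ e) := by
  classical
  set f : (e : ι) → ((i : {x // x ∈ F e}) → Dom i.val) → ℝ≥0∞ :=
    fun e t => if t ∈ R e then 1 else 0 with hfdef
  have hmain := AGM.main δ hδ (Fintype.card (Fin n)) (Fin n) rfl Dom F f hcover
  have hsum : ∀ e, (∑' t, f e t) = ((R e).card : ℝ≥0∞) := by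
    intro e
    rw [tsum_eq_sum (s := R e) (fun t ht => if_neg ht)]
    simp [hfdef]
  have hlhs : (Q.card : ℝ≥0∞) ≤ ∑' a : ∀ i, Dom i, ∏ e, f e (fun i => a i.val) ^ δ e := by
    have h1 : ∀ a ∈ Q, (1 : ℝ≥0∞) = ∏ e, f e (fun i => a i.val) ^ δ e := by
      intro a ha
      rw [Finset.prod_eq_one]
      intro e _
      rw [hfdef]
      simp only [if_pos ((hQ a).mp ha e)]
      rw [ENNReal.one_rpow]
    calc (Q.card : ℝ≥0∞) = ∑ a ∈ Q, 1 := by simp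
      _ = ∑ a ∈ Q, ∏ e, f e (fun i => a i.val) ^ δ e := Finset.sum_congr rfl h1
      _ ≤ ∑' a : ∀ i, Dom i, ∏ e, f e (fun i => a i.val) ^ δ e := ENNReal.sum_le_tsum Q
  have hEN : (Q.card : ℝ≥0∞) ≤ ∏ e, ((R e).card : ℝ≥0∞) ^ δ e := by
    refine hlhs.trans (hmain.trans ?_)
    refine le_of_eq (Finset.prod_congr rfl fun e _ => ?_)
    rw [hsum e]
  have hne : ∏ e, ((R e).card : ℝ≥0∞) ^ δ e ≠ ⊤ := by
    refine (ENNReal.prod_lt_top fun e _ => ?_).ne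
    exact (ENNReal.rpow_lt_top_of_nonneg (hδ e) (ENNReal.natCast_ne_top _))
  have := ENNReal.toReal_mono hne hEN
  simpa [ENNReal.toReal_prod, ← ENNReal.toReal_rpow] using this
end

section
/- Let Q be a full conjunctive query with multi-hypergraph H = ([n], E) and finite input relations R_F for F ∈ E, let N = max_{F∈E} |R_F|, and let ρ*(H) be the fractional edge cover number of H (the minimum of ∑_{F∈E} δ_F over all fractional edge covers δ of H). Then |Q| ≤ N^{ρ*(H)}. -/
/-!
Fix a fractional edge cover `δ` and reveal the coordinates one vertex `v` at a time. The number
of distinct partial tuples of `Q` on the revealed set `V` is at most `∏ F, |π_{F ∩ V} Q| ^ δ F`: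
split the tuples by their value at `v`; for an edge avoiding `v` the projection of each part is
contained in the projection of the whole, while the edges through `v` carry total weight at
least one, so Hölder's inequality bounds the sum over the parts by the product of the summed
projection sizes. For `V = [n]` this gives `|Q| ≤ ∏ F, |R F| ^ δ F ≤ N ^ ∑ δ`, and the bound
passes to the infimum over `δ` since `t ↦ N ^ t` is monotone and continuous for `N ≥ 1` and
antitone on `[0, ∞)` for `N ≤ 1`.
-/

open Finset MeasureTheory
open scoped ENNReal

namespace ENNReal

theorem sum_prod_rpow_le_prod_sum_rpow_of_sum_eq_one {κ τ : Type*} (s : Finset κ)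
    (T : Finset τ) (x : κ → τ → ℝ≥0∞) {p : κ → ℝ} (hp : ∑ i ∈ s, p i = 1)
    (hp0 : ∀ i ∈ s, 0 ≤ p i) :
    ∑ t ∈ T, ∏ i ∈ s, x i t ^ p i ≤ ∏ i ∈ s, (∑ t ∈ T, x i t) ^ p i := by
  let _ : MeasurableSpace τ := ⊤
  simpa [lintegral_finset] using
    lintegral_prod_norm_pow_le (μ := Measure.count.restrict (T : Set τ)) s
      (fun i _ => Measurable.of_discrete.aemeasurable) hp hp0

/-- The exponents are scaled down to total weight one, and the surplus `x i t ^ (p i - p i / c)`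
is bounded by the full sum over `t`. -/
theorem sum_prod_rpow_le_prod_sum_rpow {κ τ : Type*} (s : Finset κ) (T : Finset τ)
    (x : κ → τ → ℝ≥0∞) {p : κ → ℝ} (hp : 1 ≤ ∑ i ∈ s, p i) (hp0 : ∀ i ∈ s, 0 ≤ p i) :
    ∑ t ∈ T, ∏ i ∈ s, x i t ^ p i ≤ ∏ i ∈ s, (∑ t ∈ T, x i t) ^ p i := by
  set c := ∑ i ∈ s, p i
  have hc : 0 < c := one_pos.trans_le hp
  set X : κ → ℝ≥0∞ := fun i => ∑ t ∈ T, x i t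
  have hq0 : ∀ i ∈ s, 0 ≤ p i / c := fun i hi => div_nonneg (hp0 i hi) hc.le
  have hpq : ∀ i ∈ s, 0 ≤ p i - p i / c := fun i hi => sub_nonneg.2 (div_le_self (hp0 i hi) hp)
  have hsplit : ∀ i ∈ s, ∀ y : ℝ≥0∞, y ^ p i = y ^ (p i - p i / c) * y ^ (p i / c) := by
    intro i hi y
    rw [← rpow_add_of_nonneg _ _ (hpq i hi) (hq0 i hi), sub_add_cancel]
  calc ∑ t ∈ T, ∏ i ∈ s, x i t ^ p i
      ≤ ∑ t ∈ T, (∏ i ∈ s, X i ^ (p i - p i / c)) * ∏ i ∈ s, x i t ^ (p i / c) := by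
        refine sum_le_sum fun t ht => ?_
        rw [← prod_mul_distrib]
        refine prod_le_prod' fun i hi => ?_
        rw [hsplit i hi]
        gcongr
        · exact hpq i hi
        · exact single_le_sum (fun _ _ => zero_le) ht
    _ = (∏ i ∈ s, X i ^ (p i - p i / c)) * ∑ t ∈ T, ∏ i ∈ s, x i t ^ (p i / c) :=
        (mul_sum _ _ _).symm
    _ ≤ (∏ i ∈ s, X i ^ (p i - p i / c)) * ∏ i ∈ s, X i ^ (p i / c) := by
        gcongr
        exact sum_prod_rpow_le_prod_sum_rpow_of_sum_eq_one s T x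
          (by rw [← sum_div, div_self hc.ne']) hq0
    _ = ∏ i ∈ s, X i ^ p i := by
        rw [← prod_mul_distrib]
        exact prod_congr rfl fun i hi => (hsplit i hi _).symm

theorem sum_prod_rpow_le_prod_rpow {κ τ : Type*} [Fintype κ] (P : κ → Prop) [DecidablePred P]
    (T : Finset τ) (x : κ → τ → ℝ≥0∞) (B : κ → ℝ≥0∞) {p : κ → ℝ} (hp0 : ∀ i, 0 ≤ p i)
    (hp : 1 ≤ ∑ i with P i, p i) (hsum : ∀ i, P i → ∑ t ∈ T, x i t ≤ B i)
    (hle : ∀ i, ¬P i → ∀ t ∈ T, x i t ≤ B i) :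
    ∑ t ∈ T, ∏ i, x i t ^ p i ≤ ∏ i, B i ^ p i := by
  calc ∑ t ∈ T, ∏ i, x i t ^ p i
      = ∑ t ∈ T, (∏ i with P i, x i t ^ p i) * ∏ i with ¬P i, x i t ^ p i := by
        simp only [prod_filter_mul_prod_filter_not]
    _ ≤ ∑ t ∈ T, (∏ i with P i, x i t ^ p i) * ∏ i with ¬P i, B i ^ p i := by
        refine sum_le_sum fun t ht => ?_
        gcongr with i hi
        · exact hp0 i
        · exact hle i (mem_filter.1 hi).2 t ht
    _ = (∑ t ∈ T, ∏ i with P i, x i t ^ p i) * ∏ i with ¬P i, B i ^ p i := (sum_mul _ _ _).symm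
    _ ≤ (∏ i with P i, (∑ t ∈ T, x i t) ^ p i) * ∏ i with ¬P i, B i ^ p i := by
        gcongr
        exact sum_prod_rpow_le_prod_sum_rpow _ T x hp fun i _ => hp0 i
    _ ≤ (∏ i with P i, B i ^ p i) * ∏ i with ¬P i, B i ^ p i := by
        gcongr with i hi
        · exact hp0 i
        · exact hsum i (mem_filter.1 hi).2
    _ = ∏ i, B i ^ p i := prod_filter_mul_prod_filter_not _ _ _

end ENNReal

section Mask

variable {α : Type*} [DecidableEq α] {Dom : α → Type*}

/-- The restriction of `a` to `W`, padded with `none` so that restrictions to different sets of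
coordinates live in one type. -/
def mask (W : Finset α) (a : ∀ i, Dom i) : ∀ i, Option (Dom i) :=
  fun i => if i ∈ W then some (a i) else none

theorem mask_univ_injective [Fintype α] : Function.Injective (mask univ : (∀ i, Dom i) → _) :=
  fun a b h => funext fun i => Option.some_injective _ (by simpa [mask] using congrFun h i)

theorem mask_insert_of_eq {v : α} {t : Dom v} (W : Finset α) {a : ∀ i, Dom i} (ha : a v = t) :
    mask (insert v W) a = Function.update (mask W a) v (some t) := by
  funext i
  by_cases hi : i = v
  · subst hi; simp [mask, ha]
  · simp [mask, hi]

variable [Fintype α] [∀ i, DecidableEq (Dom i)]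

theorem card_image_mask_empty_le_one (S : Finset (∀ i, Dom i)) : #(S.image (mask ∅)) ≤ 1 :=
  card_le_one.2 fun _ ha _ hb => by
    obtain ⟨a, -, rfl⟩ := mem_image.1 ha
    obtain ⟨b, -, rfl⟩ := mem_image.1 hb
    rfl

theorem card_image_mask_mono {W W' : Finset α} (h : W' ⊆ W) (S : Finset (∀ i, Dom i)) :
    #(S.image (mask W')) ≤ #(S.image (mask W)) := by
  have hfactor : S.image (mask W') =
      (S.image (mask W)).image fun m i => if i ∈ W' then m i else none := by
    rw [image_image]
    refine image_congr fun a _ => funext fun i => ?_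
    by_cases hi : i ∈ W'
    · simp [mask, hi, h hi]
    · simp [mask, hi]
  exact hfactor ▸ card_image_le

theorem card_image_mask_insert_le {v : α} (W : Finset α) (S : Finset (∀ i, Dom i)) (t : Dom v) :
    #({a ∈ S | a v = t}.image (mask (insert v W))) ≤ #({a ∈ S | a v = t}.image (mask W)) := by
  have hfactor : {a ∈ S | a v = t}.image (mask (insert v W)) =
      ({a ∈ S | a v = t}.image (mask W)).image (Function.update · v (some t)) := by
    rw [image_image]
    exact image_congr fun a ha => mask_insert_of_eq W (mem_filter.1 ha).2
  exact hfactor ▸ card_image_le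

theorem sum_card_image_mask_fiber {v : α} {W : Finset α} (hv : v ∈ W)
    (S : Finset (∀ i, Dom i)) :
    ∑ t ∈ S.image (· v), #({a ∈ S | a v = t}.image (mask W)) = #(S.image (mask W)) := by
  have hfiber : ∀ t,
      {a ∈ S | a v = t}.image (mask W) = {m ∈ S.image (mask W) | m v = some t} := by
    intro t
    rw [filter_image]
    congr 1
    exact filter_congr fun a _ => by simp [mask, hv]
  rw [card_eq_sum_card_fiberwise (f := (· v)) (t := (S.image (· v)).image some),
    sum_image (g := some) fun _ _ _ _ h => Option.some_injective _ h]
  · simp only [hfiber]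
  · intro m hm
    obtain ⟨a, ha, rfl⟩ := mem_image.1 hm
    simpa [mask, hv] using mem_image_of_mem _ ha

theorem card_image_mask_le_prod_rpow {ι : Type*} [Fintype ι] (F : ι → Finset α) {δ : ι → ℝ}
    (hδ0 : ∀ e, 0 ≤ δ e) (V : Finset α) (hcov : ∀ v ∈ V, 1 ≤ ∑ e with v ∈ F e, δ e)
    (S : Finset (∀ i, Dom i)) :
    (#(S.image (mask V)) : ℝ≥0∞) ≤ ∏ e, (#(S.image (mask (F e ∩ V))) : ℝ≥0∞) ^ δ e := by
  induction V using Finset.induction_on generalizing S with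
  | empty =>
    simp only [inter_empty]
    rcases Nat.le_one_iff_eq_zero_or_eq_one.1 (card_image_mask_empty_le_one S) with h | h <;>
      simp [h]
  | insert v V hv ih =>
    have hcovV : ∀ u ∈ V, 1 ≤ ∑ e with u ∈ F e, δ e := fun u hu => hcov u (mem_insert_of_mem hu)
    calc (#(S.image (mask (insert v V))) : ℝ≥0∞)
        = ∑ t ∈ S.image (· v), (#({a ∈ S | a v = t}.image (mask (insert v V))) : ℝ≥0∞) := by
          exact_mod_cast (sum_card_image_mask_fiber (mem_insert_self v V) S).symm
      _ ≤ ∑ t ∈ S.image (· v), (#({a ∈ S | a v = t}.image (mask V)) : ℝ≥0∞) := by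
          exact sum_le_sum fun t _ => by exact_mod_cast card_image_mask_insert_le V S t
      _ ≤ ∑ t ∈ S.image (· v),
            ∏ e, (#({a ∈ S | a v = t}.image (mask (F e ∩ V))) : ℝ≥0∞) ^ δ e :=
          sum_le_sum fun t _ => ih hcovV _
      _ ≤ ∏ e, (#(S.image (mask (F e ∩ insert v V))) : ℝ≥0∞) ^ δ e := by
          refine ENNReal.sum_prod_rpow_le_prod_rpow (v ∈ F ·) _ _ _ hδ0
            (hcov v (mem_insert_self v V)) (fun e hve => ?_) (fun e hve t _ => ?_)
          · have hvW : v ∈ F e ∩ insert v V := mem_inter.2 ⟨hve, mem_insert_self v V⟩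
            calc ∑ t ∈ S.image (· v), (#({a ∈ S | a v = t}.image (mask (F e ∩ V))) : ℝ≥0∞)
                ≤ ∑ t ∈ S.image (· v),
                    (#({a ∈ S | a v = t}.image (mask (F e ∩ insert v V))) : ℝ≥0∞) := by
                  refine sum_le_sum fun t _ => ?_
                  exact_mod_cast
                    card_image_mask_mono (inter_subset_inter_left (subset_insert v V)) _
              _ = #(S.image (mask (F e ∩ insert v V))) := by
                  exact_mod_cast sum_card_image_mask_fiber hvW S
          · rw [inter_insert_of_notMem hve]
            exact_mod_cast card_le_card (image_subset_image (filter_subset _ _))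

theorem card_le_prod_card_image_mask_rpow {ι : Type*} [Fintype ι] (F : ι → Finset α)
    {δ : ι → ℝ} (hδ0 : ∀ e, 0 ≤ δ e) (hcov : ∀ v, 1 ≤ ∑ e with v ∈ F e, δ e)
    (S : Finset (∀ i, Dom i)) :
    (#S : ℝ) ≤ ∏ e, (#(S.image (mask (F e))) : ℝ) ^ δ e := by
  have h := card_image_mask_le_prod_rpow F hδ0 univ (fun v _ => hcov v) S
  simp only [inter_univ, card_image_of_injective S mask_univ_injective] at h
  simpa [ENNReal.toReal_prod, ← ENNReal.toReal_rpow] using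
    ENNReal.toReal_mono (ENNReal.prod_ne_top fun e _ =>
      ENNReal.rpow_ne_top_of_nonneg (hδ0 e) (ENNReal.natCast_ne_top _)) h

theorem card_image_mask_le_of_restrict_mem {W : Finset α} {S : Finset (∀ i, Dom i)}
    (R : Finset (∀ i : W, Dom i)) (h : ∀ a ∈ S, (fun i : W => a i) ∈ R) :
    #(S.image (mask W)) ≤ #R := by
  refine (card_le_card fun m hm => ?_).trans
    (card_image_le (f := fun r i => if hi : i ∈ W then some (r ⟨i, hi⟩) else none))
  obtain ⟨a, ha, rfl⟩ := mem_image.1 hm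
  refine mem_image.2 ⟨_, h a ha, funext fun i => ?_⟩
  by_cases hi : i ∈ W <;> simp [mask, hi]

end Mask

theorem le_rpow_sInf_of_forall_le_rpow {N c : ℝ} {A : Set ℝ} (hN : 0 ≤ N) (hA : A.Nonempty)
    (hA0 : ∀ s ∈ A, 0 ≤ s) (h : ∀ s ∈ A, c ≤ N ^ s) : c ≤ N ^ sInf A := by
  have hbdd : BddBelow A := ⟨0, hA0⟩
  rcases le_total N 1 with hN1 | hN1
  · obtain ⟨s, hs⟩ := hA
    exact (h s hs).trans (Real.rpow_le_rpow_of_exponent_ge' hN hN1 (le_csInf ⟨s, hs⟩ hA0)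
      (csInf_le hbdd hs))
  · have hmono : Monotone (N ^ · : ℝ → ℝ) := fun _ _ => Real.rpow_le_rpow_of_exponent_le hN1
    rw [hmono.map_csInf_of_continuousAt (Real.continuousAt_const_rpow (by positivity)) hA hbdd]
    exact le_csInf (hA.image _) (by rintro _ ⟨s, hs, rfl⟩; exact h s hs)

theorem agm_bound_fractional_cover_number_general
    {n : ℕ} (Dom : Fin n → Type*)
    {ι : Type*} [Fintype ι]
    (F : ι → Finset (Fin n))
    (hunion : ∀ v : Fin n, ∃ e : ι, v ∈ F e)
    (R : (e : ι) → Finset ((i : {x // x ∈ F e}) → Dom i.val))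
    (Q : Finset (∀ i, Dom i))
    (hQ : ∀ a : ∀ i, Dom i, a ∈ Q ↔ ∀ e : ι, (fun i : {x // x ∈ F e} => a i.val) ∈ R e) :
    (Q.card : ℝ) ≤
      ((Finset.univ.sup (fun e : ι => (R e).card) : ℕ) : ℝ) ^
        (sInf {s : ℝ | ∃ δ : ι → ℝ, (∀ e, 0 ≤ δ e) ∧
          (∀ v : Fin n, 1 ≤ ∑ e ∈ Finset.univ.filter (fun e => v ∈ F e), δ e) ∧
          s = ∑ e : ι, δ e}) := by
  classical
  set N := univ.sup fun e => #(R e)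
  have hproj : ∀ e, #(Q.image (mask (F e))) ≤ N := fun e =>
    (card_image_mask_le_of_restrict_mem (R e) fun a ha => (hQ a).1 ha e).trans
      (le_sup (f := fun e => #(R e)) (mem_univ e))
  refine le_rpow_sInf_of_forall_le_rpow N.cast_nonneg ?_ ?_ ?_
  · refine ⟨_, fun _ => 1, fun _ => zero_le_one, fun v => ?_, rfl⟩
    obtain ⟨e, he⟩ := hunion v
    simpa using card_pos.2 ⟨e, mem_filter.2 ⟨mem_univ e, he⟩⟩
  · rintro _ ⟨δ, hδ0, -, rfl⟩
    exact sum_nonneg fun e _ => hδ0 e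
  · rintro _ ⟨δ, hδ0, hcov, rfl⟩
    calc (#Q : ℝ) ≤ ∏ e, (#(Q.image (mask (F e))) : ℝ) ^ δ e :=
          card_le_prod_card_image_mask_rpow F hδ0 hcov Q
      _ ≤ ∏ e, (N : ℝ) ^ δ e := by
          gcongr with e
          · exact hδ0 e
          · exact_mod_cast hproj e
      _ = (N : ℝ) ^ ∑ e, δ e := (Real.rpow_sum_of_nonneg N.cast_nonneg fun e _ => hδ0 e).symm

/-- **AGM bound via the fractional edge cover number.** With `N` the maximum
relation size and `ρ*` the fractional edge cover number of the query hypergraph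
(whose edges are nonempty and cover all the vertices), `|Q| ≤ N ^ ρ*`. -/
theorem agm_bound_fractional_cover_number
    {n : ℕ} (hn : 1 ≤ n) (Dom : Fin n → Type*)
    {ι : Type*} [Fintype ι]
    (F : ι → Finset (Fin n))
    (hFne : ∀ e : ι, (F e).Nonempty)
    (hunion : ∀ v : Fin n, ∃ e : ι, v ∈ F e)
    (R : (e : ι) → Finset ((i : {x // x ∈ F e}) → Dom i.val))
    (Q : Finset (∀ i, Dom i))
    (hQ : ∀ a : ∀ i, Dom i, a ∈ Q ↔ ∀ e : ι, (fun i : {x // x ∈ F e} => a i.val) ∈ R e) :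
    (Q.card : ℝ) ≤
      ((Finset.univ.sup (fun e : ι => (R e).card) : ℕ) : ℝ) ^
        (sInf {s : ℝ | ∃ δ : ι → ℝ, (∀ e, 0 ≤ δ e) ∧
          (∀ v : Fin n, 1 ≤ ∑ e ∈ Finset.univ.filter (fun e => v ∈ F e), δ e) ∧
          s = ∑ e : ι, δ e}) :=
  agm_bound_fractional_cover_number_general Dom F hunion R Q hQ
end

section
/- Loomis–Whitney bound for the triangle query: |Q_△| ≤ √(|R| · |S| · |T|). -/
/-- **Loomis–Whitney bound for the triangle query:**
`|Q_△| ≤ √(|R| · |S| · |T|)`. -/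
theorem loomis_whitney_triangle
    {A B C : Type*}
    (R : Finset (A × B)) (S : Finset (B × C)) (T : Finset (A × C))
    (Q : Finset (A × B × C))
    (hQ : ∀ a b c, (a, b, c) ∈ Q ↔ (a, b) ∈ R ∧ (b, c) ∈ S ∧ (a, c) ∈ T) :
    (Q.card : ℝ) ≤ Real.sqrt ((R.card : ℝ) * (S.card : ℝ) * (T.card : ℝ)) := by
  classical
  -- fiber counts
  set n : A × C → ℕ := fun p => (Q.filter (fun q => (q.1, q.2.2) = p)).card with hn
  set r : A → ℕ := fun a => (R.filter (fun x => x.1 = a)).card with hr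
  set s : C → ℕ := fun c => (S.filter (fun x => x.2 = c)).card with hs
  have hmem : ∀ q ∈ Q, (q.1, q.2.2) ∈ T := by
    rintro ⟨a, b, c⟩ hq
    exact ((hQ a b c).1 hq).2.2
  have hQcard : Q.card = ∑ p ∈ T, n p :=
    Finset.card_eq_sum_card_fiberwise hmem
  -- n p ≤ r p.1
  have hnr : ∀ p ∈ T, n p ≤ r p.1 := by
    intro p _
    apply Finset.card_le_card_of_injOn (fun q => (q.1, q.2.1))
    · rintro ⟨a, b, c⟩ hq
      simp only [Finset.mem_coe, Finset.mem_filter] at hq ⊢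
      obtain ⟨hq, hpc⟩ := hq
      exact ⟨((hQ a b c).1 hq).1, congrArg Prod.fst hpc⟩
    · rintro ⟨a, b, c⟩ hq ⟨a', b', c'⟩ hq' h
      simp only [Finset.mem_coe, Finset.mem_filter, Prod.mk.injEq] at hq hq' h
      obtain ⟨h1, h2⟩ := h
      have hc : c = c' := by
        have := hq.2.trans hq'.2.symm
        simpa [Prod.ext_iff, h1] using this
      simp [h1, h2, hc]
  -- n p ≤ s p.2
  have hns : ∀ p ∈ T, n p ≤ s p.2 := by
    intro p _
    apply Finset.card_le_card_of_injOn (fun q => (q.2.1, q.2.2))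
    · rintro ⟨a, b, c⟩ hq
      simp only [Finset.mem_coe, Finset.mem_filter] at hq ⊢
      obtain ⟨hq, hpc⟩ := hq
      exact ⟨((hQ a b c).1 hq).2.1, congrArg Prod.snd hpc⟩
    · rintro ⟨a, b, c⟩ hq ⟨a', b', c'⟩ hq' h
      simp only [Finset.mem_coe, Finset.mem_filter, Prod.mk.injEq] at hq hq' h
      obtain ⟨h1, h2⟩ := h
      have ha : a = a' := by
        have := hq.2.trans hq'.2.symm
        exact congrArg Prod.fst this
      simp [h1, h2, ha]
  -- sum of r over distinct a ≤ |R|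
  have hrsum : ∀ t : Finset A, ∑ a ∈ t, r a ≤ R.card := by
    intro t
    have hfib : ∀ a ∈ t, (R.filter (fun x => x.1 ∈ t)).filter (fun x => x.1 = a)
        = R.filter (fun x => x.1 = a) := by
      intro a ha
      ext x
      simp only [Finset.mem_filter]
      constructor
      · rintro ⟨⟨h1, _⟩, h3⟩; exact ⟨h1, h3⟩
      · rintro ⟨h1, h2⟩; exact ⟨⟨h1, h2 ▸ ha⟩, h2⟩
    calc ∑ a ∈ t, r a
        = ∑ a ∈ t, ((R.filter (fun x => x.1 ∈ t)).filter (fun x => x.1 = a)).card :=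
          Finset.sum_congr rfl fun a ha => by rw [hfib a ha]
      _ = (R.filter (fun x => x.1 ∈ t)).card :=
          (Finset.card_eq_sum_card_fiberwise (fun x hx => (Finset.mem_filter.1 hx).2)).symm
      _ ≤ R.card := Finset.card_le_card (Finset.filter_subset _ _)
  have hssum : ∀ t : Finset C, ∑ c ∈ t, s c ≤ S.card := by
    intro t
    have hfib : ∀ c ∈ t, (S.filter (fun x => x.2 ∈ t)).filter (fun x => x.2 = c)
        = S.filter (fun x => x.2 = c) := by
      intro c hc
      ext x
      simp only [Finset.mem_filter]
      constructor
      · rintro ⟨⟨h1, _⟩, h3⟩; exact ⟨h1, h3⟩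
      · rintro ⟨h1, h2⟩; exact ⟨⟨h1, h2 ▸ hc⟩, h2⟩
    calc ∑ c ∈ t, s c
        = ∑ c ∈ t, ((S.filter (fun x => x.2 ∈ t)).filter (fun x => x.2 = c)).card :=
          Finset.sum_congr rfl fun c hc => by rw [hfib c hc]
      _ = (S.filter (fun x => x.2 ∈ t)).card :=
          (Finset.card_eq_sum_card_fiberwise (fun x hx => (Finset.mem_filter.1 hx).2)).symm
      _ ≤ S.card := Finset.card_le_card (Finset.filter_subset _ _)
  -- ∑_{p ∈ T} r p.1 * s p.2 ≤ |R| * |S|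
  have hrs : ∑ p ∈ T, r p.1 * s p.2 ≤ R.card * S.card := by
    calc ∑ p ∈ T, r p.1 * s p.2
        ≤ ∑ p ∈ (T.image Prod.fst) ×ˢ (T.image Prod.snd), r p.1 * s p.2 := by
          apply Finset.sum_le_sum_of_subset
          intro p hp
          exact Finset.mem_product.2 ⟨Finset.mem_image_of_mem _ hp,
            Finset.mem_image_of_mem _ hp⟩
      _ = (∑ a ∈ T.image Prod.fst, r a) * (∑ c ∈ T.image Prod.snd, s c) := by
          rw [Finset.sum_product, ← Finset.sum_mul_sum]
      _ ≤ R.card * S.card := Nat.mul_le_mul (hrsum _) (hssum _)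
  -- Cauchy–Schwarz: (∑ n)² ≤ |T| * ∑ n²
  have hCS : (∑ p ∈ T, n p) ^ 2 ≤ T.card * ∑ p ∈ T, n p ^ 2 := by
    have := Finset.sum_mul_sq_le_sq_mul_sq (R := ℕ) T (fun _ => 1) n
    simp only [one_pow, one_mul, Finset.sum_const, smul_eq_mul, mul_one] at this
    exact this
  -- main ℕ inequality
  have hkey : Q.card ^ 2 ≤ R.card * S.card * T.card := by
    calc Q.card ^ 2 = (∑ p ∈ T, n p) ^ 2 := by rw [hQcard]
      _ ≤ T.card * ∑ p ∈ T, n p ^ 2 := hCS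
      _ ≤ T.card * ∑ p ∈ T, r p.1 * s p.2 := by
          apply Nat.mul_le_mul_left
          apply Finset.sum_le_sum
          intro p hp
          calc n p ^ 2 = n p * n p := sq (n p)
            _ ≤ r p.1 * s p.2 := Nat.mul_le_mul (hnr p hp) (hns p hp)
      _ ≤ T.card * (R.card * S.card) := Nat.mul_le_mul_left _ hrs
      _ = R.card * S.card * T.card := by ring
  -- conclude in ℝ
  have h2 : ((Q.card : ℝ)) ^ 2 ≤ (R.card : ℝ) * S.card * T.card := by
    have := (Nat.cast_le (α := ℝ)).2 hkey
    push_cast at this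
    linarith
  have := Real.sqrt_le_sqrt h2
  rwa [Real.sqrt_sq (by positivity)] at this
end

section
/- If α, β, γ are nonnegative reals with α+β ≥ 1, β+γ ≥ 1 and α+γ ≥ 1, then |Q_△| ≤ |R|^α · |S|^β · |T|^γ. -/
open Finset Real

/-- The purely analytic core: if `q ≤ rs, st, rt` and `q² ≤ rst` with `r,s,t ≥ 1`,
then `q ≤ r^α s^β t^γ` for any fractional edge cover exponents. -/
lemma agm_key (q r s t α β γ : ℝ) (hq : 0 ≤ q) (hr : 1 ≤ r) (hs : 1 ≤ s) (ht : 1 ≤ t)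
    (h1 : q ≤ r * s) (h2 : q ≤ s * t) (h3 : q ≤ r * t) (h4 : q ^ 2 ≤ r * s * t)
    (hα : 0 ≤ α) (hβ : 0 ≤ β) (hγ : 0 ≤ γ)
    (hαβ : 1 ≤ α + β) (hβγ : 1 ≤ β + γ) (hαγ : 1 ≤ α + γ) :
    q ≤ r ^ α * s ^ β * t ^ γ := by
  have hr0 : (0:ℝ) < r := lt_of_lt_of_le one_pos hr
  have hs0 : (0:ℝ) < s := lt_of_lt_of_le one_pos hs
  have ht0 : (0:ℝ) < t := lt_of_lt_of_le one_pos ht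
  rcases eq_or_lt_of_le hq with hq0 | hq0
  · calc q = 0 := hq0.symm
      _ ≤ _ := by positivity
  -- reduced exponents
  set a : ℝ := min α 1 with ha_def
  set b : ℝ := min β 1 with hb_def
  set c : ℝ := 1 - min a b with hc_def
  have ha0 : 0 ≤ a := le_min hα zero_le_one
  have hb0 : 0 ≤ b := le_min hβ zero_le_one
  have ha1 : a ≤ 1 := min_le_right _ _
  have hb1 : b ≤ 1 := min_le_right _ _
  have haα : a ≤ α := min_le_left _ _
  have hbβ : b ≤ β := min_le_left _ _
  have hcγ : c ≤ γ := by
    rcases le_total a b with h | h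
    · rw [hc_def, min_eq_left h, ha_def]
      rcases le_total α 1 with h' | h'
      · rw [min_eq_left h']; linarith
      · rw [min_eq_right h']; linarith
    · rw [hc_def, min_eq_right h, hb_def]
      rcases le_total β 1 with h' | h'
      · rw [min_eq_left h']; linarith
      · rw [min_eq_right h']; linarith
  -- the convex combination weights
  set l1 : ℝ := a + b - 1 with hl1
  set l2 : ℝ := b + c - 1 with hl2
  set l3 : ℝ := a + c - 1 with hl3
  set l4 : ℝ := 2 - (a + b + c) with hl4
  have hl10 : 0 ≤ l1 := by
    rw [hl1, ha_def, hb_def]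
    rcases le_total α 1 with h | h <;> rcases le_total β 1 with h' | h'
    · rw [min_eq_left h, min_eq_left h']; linarith
    · rw [min_eq_left h, min_eq_right h']; linarith
    · rw [min_eq_right h, min_eq_left h']; linarith
    · rw [min_eq_right h, min_eq_right h']; linarith
  have hl20 : 0 ≤ l2 := by
    have : min a b ≤ b := min_le_right _ _
    rw [hl2, hc_def]; linarith
  have hl30 : 0 ≤ l3 := by
    have : min a b ≤ a := min_le_left _ _
    rw [hl3, hc_def]; linarith
  have hl40 : 0 ≤ l4 := by
    have h0 : 0 ≤ min a b := le_min ha0 hb0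
    rcases le_total a b with h | h
    · rw [hl4, hc_def, min_eq_left h]; linarith
    · rw [hl4, hc_def, min_eq_right h]; linarith
  have hsum : l1 + l2 + l3 + 2 * l4 = 1 := by rw [hl1, hl2, hl3, hl4]; ring
  -- bound each factor
  have f1 : q ^ l1 ≤ r ^ l1 * s ^ l1 :=
    (Real.rpow_le_rpow hq h1 hl10).trans_eq (Real.mul_rpow hr0.le hs0.le)
  have f2 : q ^ l2 ≤ s ^ l2 * t ^ l2 :=
    (Real.rpow_le_rpow hq h2 hl20).trans_eq (Real.mul_rpow hs0.le ht0.le)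
  have f3 : q ^ l3 ≤ r ^ l3 * t ^ l3 :=
    (Real.rpow_le_rpow hq h3 hl30).trans_eq (Real.mul_rpow hr0.le ht0.le)
  have f4 : q ^ (2 * l4) ≤ r ^ l4 * (s ^ l4 * t ^ l4) := by
    have e : q ^ (2 * l4) = (q ^ 2) ^ l4 := by
      rw [Real.rpow_mul hq, Real.rpow_two]
    rw [e]
    calc (q ^ 2) ^ l4 ≤ (r * s * t) ^ l4 := Real.rpow_le_rpow (by positivity) h4 hl40
      _ = r ^ l4 * (s ^ l4 * t ^ l4) := by
          rw [Real.mul_rpow (by positivity) ht0.le, Real.mul_rpow hr0.le hs0.le]; ring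
  have step : q ≤ r ^ a * s ^ b * t ^ c := by
    have eq1 : q = q ^ l1 * q ^ l2 * q ^ l3 * q ^ (2 * l4) := by
      rw [← Real.rpow_add hq0, ← Real.rpow_add hq0, ← Real.rpow_add hq0, hsum,
        Real.rpow_one]
    have hle : q ≤ (r ^ l1 * s ^ l1) * (s ^ l2 * t ^ l2) * (r ^ l3 * t ^ l3) *
        (r ^ l4 * (s ^ l4 * t ^ l4)) := by
      rw [eq1]
      gcongr
    have eq2 : (r ^ l1 * s ^ l1) * (s ^ l2 * t ^ l2) * (r ^ l3 * t ^ l3) *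
        (r ^ l4 * (s ^ l4 * t ^ l4)) = r ^ (l1 + l3 + l4) * s ^ (l1 + l2 + l4) *
        t ^ (l2 + l3 + l4) := by
      rw [Real.rpow_add hr0, Real.rpow_add hr0, Real.rpow_add hs0, Real.rpow_add hs0,
        Real.rpow_add ht0, Real.rpow_add ht0]
      ring
    have ea : l1 + l3 + l4 = a := by rw [hl1, hl3, hl4]; ring
    have eb : l1 + l2 + l4 = b := by rw [hl1, hl2, hl4]; ring
    have ec : l2 + l3 + l4 = c := by rw [hl2, hl3, hl4]; ring
    calc q ≤ _ := hle
      _ = r ^ a * s ^ b * t ^ c := by rw [eq2, ea, eb, ec]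
  calc q ≤ r ^ a * s ^ b * t ^ c := step
    _ ≤ r ^ α * s ^ β * t ^ γ := by
        gcongr <;> assumption

/-- **AGM bound for the triangle query:** if `α, β, γ ≥ 0` with
`α+β ≥ 1`, `β+γ ≥ 1`, `α+γ ≥ 1`, then `|Q_△| ≤ |R|^α · |S|^β · |T|^γ`. -/
theorem agm_triangle
    {A B C : Type*}
    (R : Finset (A × B)) (S : Finset (B × C)) (T : Finset (A × C))
    (Q : Finset (A × B × C))
    (hQ : ∀ a b c, (a, b, c) ∈ Q ↔ (a, b) ∈ R ∧ (b, c) ∈ S ∧ (a, c) ∈ T)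
    (α β γ : ℝ) (hα : 0 ≤ α) (hβ : 0 ≤ β) (hγ : 0 ≤ γ)
    (hαβ : 1 ≤ α + β) (hβγ : 1 ≤ β + γ) (hαγ : 1 ≤ α + γ) :
    (Q.card : ℝ) ≤ (R.card : ℝ) ^ α * (S.card : ℝ) ^ β * (T.card : ℝ) ^ γ := by
  classical
  -- the three product bounds
  have bRS : Q.card ≤ R.card * S.card := by
    rw [← Finset.card_product]
    apply Finset.card_le_card_of_injOn (fun x => ((x.1, x.2.1), (x.2.1, x.2.2)))
    · rintro ⟨a, b, c⟩ hx
      obtain ⟨h1, h2, h3⟩ := (hQ a b c).1 hx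
      exact Finset.mem_product.2 ⟨h1, h2⟩
    · rintro ⟨a, b, c⟩ - ⟨a', b', c'⟩ - h
      simp only [Prod.mk.injEq] at h
      obtain ⟨⟨rfl, rfl⟩, -, rfl⟩ := h
      rfl
  have bST : Q.card ≤ S.card * T.card := by
    rw [← Finset.card_product]
    apply Finset.card_le_card_of_injOn (fun x => ((x.2.1, x.2.2), (x.1, x.2.2)))
    · rintro ⟨a, b, c⟩ hx
      obtain ⟨h1, h2, h3⟩ := (hQ a b c).1 hx
      exact Finset.mem_product.2 ⟨h2, h3⟩
    · rintro ⟨a, b, c⟩ - ⟨a', b', c'⟩ - h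
      simp only [Prod.mk.injEq] at h
      obtain ⟨⟨rfl, rfl⟩, rfl, -⟩ := h
      rfl
  have bRT : Q.card ≤ R.card * T.card := by
    rw [← Finset.card_product]
    apply Finset.card_le_card_of_injOn (fun x => ((x.1, x.2.1), (x.1, x.2.2)))
    · rintro ⟨a, b, c⟩ hx
      obtain ⟨h1, h2, h3⟩ := (hQ a b c).1 hx
      exact Finset.mem_product.2 ⟨h1, h3⟩
    · rintro ⟨a, b, c⟩ - ⟨a', b', c'⟩ - h
      simp only [Prod.mk.injEq] at h
      obtain ⟨⟨rfl, rfl⟩, -, rfl⟩ := h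
      rfl
  -- the square bound  |Q|² ≤ |R||S||T|  (Cauchy–Schwarz / Loomis–Whitney)
  set I : Finset B := Q.image (fun x => x.2.1) with hI
  set fib : B → Finset (A × B × C) := fun b => Q.filter (fun x => x.2.1 = b) with hfib_def
  set dR : B → ℕ := fun b => (R.filter (fun p => p.2 = b)).card with hdR
  set dS : B → ℕ := fun b => (S.filter (fun p => p.1 = b)).card with hdS
  have hfib : Q.card = ∑ b ∈ I, (fib b).card :=
    Finset.card_eq_sum_card_fiberwise (fun x hx => Finset.mem_image_of_mem _ hx)
  have hfibT : ∀ b, (fib b).card ≤ T.card := by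
    intro b
    apply Finset.card_le_card_of_injOn (fun x => (x.1, x.2.2))
    · rintro ⟨a, b', c⟩ hx
      rw [hfib_def, Finset.mem_coe, Finset.mem_filter] at hx
      exact ((hQ a b' c).1 hx.1).2.2
    · rintro ⟨a, b1, c⟩ h1 ⟨a', b2, c'⟩ h2 h
      simp only [hfib_def, Finset.coe_filter, Set.mem_setOf_eq] at h1 h2
      simp only [Prod.mk.injEq] at h
      obtain ⟨rfl, rfl⟩ := h
      rw [h1.2, h2.2]
  have hfibRS : ∀ b, (fib b).card ≤ dR b * dS b := by
    intro b
    rw [hdR, hdS, ← Finset.card_product]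
    apply Finset.card_le_card_of_injOn (fun x => ((x.1, x.2.1), (x.2.1, x.2.2)))
    · rintro ⟨a, b', c⟩ hx
      rw [hfib_def, Finset.mem_coe, Finset.mem_filter] at hx
      obtain ⟨hxQ, hb⟩ := hx
      simp only at hb
      subst hb
      obtain ⟨h1, h2, h3⟩ := (hQ a b' c).1 hxQ
      exact Finset.mem_product.2 ⟨Finset.mem_filter.2 ⟨h1, rfl⟩, Finset.mem_filter.2 ⟨h2, rfl⟩⟩
    · rintro ⟨a, b1, c⟩ - ⟨a', b2, c'⟩ - h
      simp only [Prod.mk.injEq] at h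
      obtain ⟨⟨rfl, rfl⟩, -, rfl⟩ := h
      rfl
  have sumR : ∑ b ∈ I, dR b ≤ R.card := by
    have hdisj : ∀ b1 ∈ I, ∀ b2 ∈ I, b1 ≠ b2 →
        Disjoint (R.filter (fun p => p.2 = b1)) (R.filter (fun p => p.2 = b2)) := by
      rintro b1 - b2 - hne
      rw [Finset.disjoint_left]
      intro p h1 h2
      rw [Finset.mem_filter] at h1 h2
      exact hne (by rw [← h1.2, h2.2])
    calc ∑ b ∈ I, dR b = (I.biUnion (fun b => R.filter (fun p => p.2 = b))).card :=
        (Finset.card_biUnion hdisj).symm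
      _ ≤ R.card := Finset.card_le_card
          (Finset.biUnion_subset.2 fun b _ => Finset.filter_subset _ _)
  have sumS : ∑ b ∈ I, dS b ≤ S.card := by
    have hdisj : ∀ b1 ∈ I, ∀ b2 ∈ I, b1 ≠ b2 →
        Disjoint (S.filter (fun p => p.1 = b1)) (S.filter (fun p => p.1 = b2)) := by
      rintro b1 - b2 - hne
      rw [Finset.disjoint_left]
      intro p h1 h2
      rw [Finset.mem_filter] at h1 h2
      exact hne (by rw [← h1.2, h2.2])
    calc ∑ b ∈ I, dS b = (I.biUnion (fun b => S.filter (fun p => p.1 = b))).card :=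
        (Finset.card_biUnion hdisj).symm
      _ ≤ S.card := Finset.card_le_card
          (Finset.biUnion_subset.2 fun b _ => Finset.filter_subset _ _)
  have key : ∀ b ∈ I, ((fib b).card : ℝ) ≤
      (Real.sqrt (dR b) * Real.sqrt (dS b)) * Real.sqrt (T.card) := by
    intro b _hbI
    have hsq : ((fib b).card : ℝ) ^ 2 ≤ ((dR b : ℝ) * (dS b : ℝ)) * (T.card : ℝ) := by
      have := Nat.mul_le_mul (hfibRS b) (hfibT b)
      have h2 : (fib b).card ^ 2 ≤ dR b * dS b * T.card := by
        calc (fib b).card ^ 2 = (fib b).card * (fib b).card := sq ((fib b).card : ℕ)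
          _ ≤ dR b * dS b * T.card := this
      exact_mod_cast h2
    calc ((fib b).card : ℝ) = Real.sqrt (((fib b).card : ℝ) ^ 2) :=
        (Real.sqrt_sq (by positivity)).symm
      _ ≤ Real.sqrt (((dR b : ℝ) * (dS b : ℝ)) * (T.card : ℝ)) := Real.sqrt_le_sqrt hsq
      _ = (Real.sqrt (dR b) * Real.sqrt (dS b)) * Real.sqrt (T.card) := by
          rw [Real.sqrt_mul (by positivity), Real.sqrt_mul (by positivity)]
  have bigQ : (Q.card : ℝ) ≤ Real.sqrt (R.card) * Real.sqrt (S.card) * Real.sqrt (T.card) := by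
    calc (Q.card : ℝ) = ∑ b ∈ I, ((fib b).card : ℝ) := by rw [hfib]; push_cast; rfl
      _ ≤ ∑ b ∈ I, (Real.sqrt (dR b) * Real.sqrt (dS b)) * Real.sqrt (T.card) :=
          Finset.sum_le_sum key
      _ = (∑ b ∈ I, Real.sqrt (dR b) * Real.sqrt (dS b)) * Real.sqrt (T.card) := by
          rw [Finset.sum_mul]
      _ ≤ (Real.sqrt (∑ b ∈ I, (dR b : ℝ)) * Real.sqrt (∑ b ∈ I, (dS b : ℝ))) *
            Real.sqrt (T.card) := by
          apply mul_le_mul_of_nonneg_right _ (Real.sqrt_nonneg _)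
          exact Real.sum_sqrt_mul_sqrt_le I (fun b => by positivity) (fun b => by positivity)
      _ ≤ Real.sqrt (R.card) * Real.sqrt (S.card) * Real.sqrt (T.card) := by
          have h1 : Real.sqrt (∑ b ∈ I, (dR b : ℝ)) ≤ Real.sqrt (R.card) :=
            Real.sqrt_le_sqrt (by exact_mod_cast sumR)
          have h2 : Real.sqrt (∑ b ∈ I, (dS b : ℝ)) ≤ Real.sqrt (S.card) :=
            Real.sqrt_le_sqrt (by exact_mod_cast sumS)
          exact mul_le_mul_of_nonneg_right
            (mul_le_mul h1 h2 (Real.sqrt_nonneg _) (Real.sqrt_nonneg _)) (Real.sqrt_nonneg _)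
  have bsq : (Q.card : ℝ) ^ 2 ≤ (R.card : ℝ) * (S.card : ℝ) * (T.card : ℝ) := by
    calc (Q.card : ℝ) ^ 2 ≤ (Real.sqrt (R.card) * Real.sqrt (S.card) * Real.sqrt (T.card)) ^ 2 :=
        pow_le_pow_left₀ (by positivity) bigQ 2
      _ = (R.card : ℝ) * (S.card : ℝ) * (T.card : ℝ) := by
          rw [mul_pow, mul_pow, Real.sq_sqrt (by positivity), Real.sq_sqrt (by positivity),
            Real.sq_sqrt (by positivity)]
  -- finish
  rcases Nat.eq_zero_or_pos Q.card with h0 | hpos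
  · rw [h0]
    push_cast
    positivity
  · obtain ⟨⟨a, b, c⟩, hx⟩ := Finset.card_pos.mp hpos
    obtain ⟨h1, h2, h3⟩ := (hQ a b c).1 hx
    have hr : (1 : ℝ) ≤ (R.card : ℝ) := by
      exact_mod_cast Finset.card_pos.2 ⟨(a, b), h1⟩
    have hs : (1 : ℝ) ≤ (S.card : ℝ) := by
      exact_mod_cast Finset.card_pos.2 ⟨(b, c), h2⟩
    have ht : (1 : ℝ) ≤ (T.card : ℝ) := by
      exact_mod_cast Finset.card_pos.2 ⟨(a, c), h3⟩
    exact agm_key _ _ _ _ _ _ _ (by positivity) hr hs ht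
      (by exact_mod_cast bRS) (by exact_mod_cast bST) (by exact_mod_cast bRT) bsq
      hα hβ hγ hαβ hβγ hαγ
end

section
/- Shearer's inequality for the triangle: Let α, β, γ be nonnegative reals. The inequality H[A,B,C] ≤ α·H[A,B] + β·H[B,C] + γ·H[A,C] holds for every triple (A,B,C) of jointly distributed random variables taking finitely many values if and only if α+β ≥ 1, β+γ ≥ 1 and α+γ ≥ 1. -/
open Finset

/-- Shannon entropy (base 2) of a probability mass function on a finite type. -/
noncomputable def entropy2 {α : Type*} [Fintype α] (p : α → ℝ) : ℝ :=
  (∑ x, Real.negMulLog (p x)) / Real.log 2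

/-!
Measure entropy in nats, `H = ∑ negMulLog`. Submodularity `H[ABC] + H[B] ≤ H[AB] + H[BC]` is
Gibbs' inequality between the law `p` and the law with the same `(A, B)` and `(B, C)` marginals
under which `A` and `C` are conditionally independent given `B`. Adding `β` times it, `γ` times
its variant conditioned on `A` and `β` times `H[AB] ≤ H[A] + H[B]` to the nonnegative quantities
`(α + β - 1) (H[AB] - H[A])`, `(β + γ - 1) (H[ABC] - H[AB])` and `(α + γ - 1) H[A]` gives the
inequality. Conversely, a fair bit `B` with `A`, `C` constant has `H[ABC] = H[AB] = H[BC] = 1` and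
`H[AC] = 0`, forcing `α + β ≥ 1`; symmetrically for the other two constraints.
-/

open Real

theorem negMulLog_le_neg_mul_log_add_sub {x y : ℝ} (hx : 0 ≤ x) (hy : 0 ≤ y)
    (hxy : 0 < x → 0 < y) : negMulLog x ≤ -(x * log y) + (y - x) := by
  rcases hx.eq_or_lt with rfl | hx
  · simpa using hy
  have hy := hxy hx
  have hx_eq : x = y * (x / y) := by field_simp
  calc negMulLog x = x / y * negMulLog y + y * negMulLog (x / y) := by
        rw [← negMulLog_mul, ← hx_eq]
    _ ≤ x / y * negMulLog y + y * (1 - x / y) := by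
        gcongr; exact negMulLog_le_one_sub_self (by positivity)
    _ = -(x * log y) + (y - x) := by
        simp only [negMulLog]; field_simp

theorem sum_negMulLog_le_sum_neg_mul_log {ι : Type*} [Fintype ι] {p q : ι → ℝ}
    (hp : ∀ i, 0 ≤ p i) (hq : ∀ i, 0 ≤ q i) (hpq : ∀ i, 0 < p i → 0 < q i)
    (hsum : ∑ i, q i ≤ ∑ i, p i) :
    ∑ i, negMulLog (p i) ≤ ∑ i, -(p i * log (q i)) :=
  calc ∑ i, negMulLog (p i) ≤ ∑ i, (-(p i * log (q i)) + (q i - p i)) :=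
        sum_le_sum fun i _ ↦ negMulLog_le_neg_mul_log_add_sub (hp i) (hq i) (hpq i)
    _ ≤ ∑ i, -(p i * log (q i)) := by
        rw [sum_add_distrib, sum_sub_distrib]; linarith

theorem negMulLog_sum_le_sum_negMulLog {ι : Type*} [Fintype ι] {f : ι → ℝ}
    (hf : ∀ i, 0 ≤ f i) : negMulLog (∑ i, f i) ≤ ∑ i, negMulLog (f i) := by
  rw [negMulLog, neg_mul, sum_mul, ← sum_neg_distrib]
  refine sum_le_sum fun i _ ↦ ?_
  rcases (hf i).eq_or_lt with h | h
  · simp [← h]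
  · rw [negMulLog, neg_mul, neg_le_neg_iff]
    exact mul_le_mul_of_nonneg_left
      (log_le_log h (single_le_sum (fun j _ ↦ hf j) (mem_univ i))) h.le

theorem sum_mul_log_sum {ι : Type*} [Fintype ι] (f : ι → ℝ) :
    ∑ i, f i * log (∑ j, f j) = -negMulLog (∑ j, f j) := by
  rw [← sum_mul, negMulLog, neg_mul, neg_neg]

variable {A B C : Type*} [Fintype A] [Fintype C]

-- `p(a,b) p(b,c) / p(b)`; where `p(b) = 0`, Lean's `x / 0 = 0` gives the right value `0`.
noncomputable def condIndepCoupling (p : A → B → C → ℝ) (a : A) (b : B) (c : C) : ℝ :=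
  (∑ c', p a b c') * (∑ a', p a' b c) / ∑ a', ∑ c', p a' b c'

theorem condIndepCoupling_nonneg {p : A → B → C → ℝ} (hp : ∀ a b c, 0 ≤ p a b c) (a : A) (b : B)
    (c : C) : 0 ≤ condIndepCoupling p a b c :=
  div_nonneg (mul_nonneg (sum_nonneg fun c _ ↦ hp a b c) (sum_nonneg fun a _ ↦ hp a b c))
    (sum_nonneg fun a _ ↦ sum_nonneg fun c _ ↦ hp a b c)

theorem marginals_pos_of_pos {p : A → B → C → ℝ} (hp : ∀ a b c, 0 ≤ p a b c) {a : A} {b : B} {c : C}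
    (h : 0 < p a b c) : 0 < ∑ c, p a b c ∧ 0 < ∑ a, p a b c ∧ 0 < ∑ a, ∑ c, p a b c := by
  have hAB : 0 < ∑ c, p a b c := h.trans_le (single_le_sum (fun c _ ↦ hp a b c) (mem_univ c))
  exact ⟨hAB, h.trans_le (single_le_sum (fun a _ ↦ hp a b c) (mem_univ a)),
    hAB.trans_le (single_le_sum (fun a _ ↦ sum_nonneg fun c _ ↦ hp a b c) (mem_univ a))⟩

theorem condIndepCoupling_pos {p : A → B → C → ℝ} (hp : ∀ a b c, 0 ≤ p a b c) {a : A} {b : B}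
    {c : C} (h : 0 < p a b c) : 0 < condIndepCoupling p a b c :=
  have ⟨hAB, hBC, hB⟩ := marginals_pos_of_pos hp h
  div_pos (mul_pos hAB hBC) hB

theorem sum_condIndepCoupling [Fintype B] (p : A → B → C → ℝ) :
    ∑ a, ∑ b, ∑ c, condIndepCoupling p a b c = ∑ a, ∑ b, ∑ c, p a b c :=
  calc ∑ a, ∑ b, ∑ c, condIndepCoupling p a b c
      = ∑ b, (∑ a, ∑ c, p a b c) * (∑ c, ∑ a, p a b c) / ∑ a, ∑ c, p a b c := by
        rw [sum_comm]
        refine sum_congr rfl fun b _ ↦ ?_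
        simp only [sum_mul_sum, sum_div, condIndepCoupling]
    _ = ∑ b, ∑ a, ∑ c, p a b c := by simp only [sum_comm (γ := C), mul_self_div_self]
    _ = ∑ a, ∑ b, ∑ c, p a b c := sum_comm

theorem sum_neg_mul_log_condIndepCoupling [Fintype B] {p : A → B → C → ℝ}
    (hp : ∀ a b c, 0 ≤ p a b c) :
    ∑ a, ∑ b, ∑ c, -(p a b c * log (condIndepCoupling p a b c)) =
      ∑ a, ∑ b, negMulLog (∑ c, p a b c) + ∑ b, ∑ c, negMulLog (∑ a, p a b c) -
        ∑ b, negMulLog (∑ a, ∑ c, p a b c) := by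
  have hlog a b c : p a b c * log (condIndepCoupling p a b c) = p a b c * log (∑ c, p a b c) +
      p a b c * log (∑ a, p a b c) - p a b c * log (∑ a, ∑ c, p a b c) := by
    rcases (hp a b c).eq_or_lt with h | h
    · simp [← h]
    · obtain ⟨hAB, hBC, hB⟩ := marginals_pos_of_pos hp h
      rw [condIndepCoupling, log_div (mul_pos hAB hBC).ne' hB.ne', log_mul hAB.ne' hBC.ne']
      ring
  have hAB : ∑ a, ∑ b, ∑ c, p a b c * log (∑ c, p a b c) =
      -∑ a, ∑ b, negMulLog (∑ c, p a b c) := by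
    simp only [sum_mul_log_sum, sum_neg_distrib]
  have hBC : ∑ a, ∑ b, ∑ c, p a b c * log (∑ a, p a b c) =
      -∑ b, ∑ c, negMulLog (∑ a, p a b c) := by
    rw [sum_comm, ← sum_neg_distrib]
    exact sum_congr rfl fun b _ ↦ by rw [sum_comm]; simp only [sum_mul_log_sum, sum_neg_distrib]
  have hB : ∑ a, ∑ b, ∑ c, p a b c * log (∑ a, ∑ c, p a b c) =
      -∑ b, negMulLog (∑ a, ∑ c, p a b c) := by
    rw [sum_comm, ← sum_neg_distrib]
    simp only [← sum_mul, negMulLog, neg_mul, neg_neg]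
  simp only [hlog, sum_neg_distrib, sum_sub_distrib, sum_add_distrib, hAB, hBC, hB]
  ring

theorem sum_negMulLog_submodular [Fintype B] {p : A → B → C → ℝ}
    (hp : ∀ a b c, 0 ≤ p a b c) :
    ∑ a, ∑ b, ∑ c, negMulLog (p a b c) + ∑ b, negMulLog (∑ a, ∑ c, p a b c) ≤
      ∑ a, ∑ b, negMulLog (∑ c, p a b c) + ∑ b, ∑ c, negMulLog (∑ a, p a b c) := by
  have gibbs := sum_negMulLog_le_sum_neg_mul_log (p := fun x : A × B × C ↦ p x.1 x.2.1 x.2.2)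
    (q := fun x ↦ condIndepCoupling p x.1 x.2.1 x.2.2) (fun _ ↦ hp _ _ _)
    (fun _ ↦ condIndepCoupling_nonneg hp _ _ _) (fun _ ↦ condIndepCoupling_pos hp)
    (by simp only [Fintype.sum_prod_type, sum_condIndepCoupling, le_refl])
  simp only [Fintype.sum_prod_type, sum_neg_mul_log_condIndepCoupling hp] at gibbs
  linarith

theorem sum_negMulLog_subadditive [Fintype B] {p : A → B → ℝ} (hp : ∀ a b, 0 ≤ p a b) :
    ∑ a, ∑ b, negMulLog (p a b) + negMulLog (∑ a, ∑ b, p a b) ≤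
      ∑ a, negMulLog (∑ b, p a b) + ∑ b, negMulLog (∑ a, p a b) := by
  simpa only [Fintype.sum_unique] using
    sum_negMulLog_submodular (p := fun a (_ : Unit) b ↦ p a b) fun a _ b ↦ hp a b

theorem shearer_triangle_of_polymatroid {α β γ H HAB HBC HAC HA HB : ℝ}
    (hβ : 0 ≤ β) (hγ : 0 ≤ γ) (hαβ : 1 ≤ α + β) (hβγ : 1 ≤ β + γ) (hαγ : 1 ≤ α + γ)
    (hHA : 0 ≤ HA) (hHA_le : HA ≤ HAB) (hHAB_le : HAB ≤ H) (hHAB : HAB ≤ HA + HB)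
    (submod_A : H + HA ≤ HAB + HAC) (submod_B : H + HB ≤ HAB + HBC) :
    H ≤ α * HAB + β * HBC + γ * HAC := by
  nlinarith [mul_nonneg hβ (sub_nonneg.2 submod_B), mul_nonneg hγ (sub_nonneg.2 submod_A),
    mul_nonneg hβ (sub_nonneg.2 hHAB), mul_nonneg (sub_nonneg.2 hαβ) (sub_nonneg.2 hHA_le),
    mul_nonneg (sub_nonneg.2 hβγ) (sub_nonneg.2 hHAB_le), mul_nonneg (sub_nonneg.2 hαγ) hHA]

theorem sum_negMulLog_le_shearer [Fintype B] {p : A → B → C → ℝ}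
    (hp : ∀ a b c, 0 ≤ p a b c) (hsum : ∑ a, ∑ b, ∑ c, p a b c = 1) {α β γ : ℝ}
    (hβ : 0 ≤ β) (hγ : 0 ≤ γ) (hαβ : 1 ≤ α + β) (hβγ : 1 ≤ β + γ) (hαγ : 1 ≤ α + γ) :
    ∑ a, ∑ b, ∑ c, negMulLog (p a b c) ≤
      α * ∑ a, ∑ b, negMulLog (∑ c, p a b c) + β * ∑ b, ∑ c, negMulLog (∑ a, p a b c) +
        γ * ∑ a, ∑ c, negMulLog (∑ b, p a b c) := by
  have hpAB a b : 0 ≤ ∑ c, p a b c := sum_nonneg fun c _ ↦ hp a b c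
  have hpA a : 0 ≤ ∑ b, ∑ c, p a b c := sum_nonneg fun b _ ↦ hpAB a b
  refine shearer_triangle_of_polymatroid hβ hγ hαβ hβγ hαγ
    (HA := ∑ a, negMulLog (∑ b, ∑ c, p a b c)) (HB := ∑ b, negMulLog (∑ a, ∑ c, p a b c))
    (sum_nonneg fun a _ ↦ negMulLog_nonneg (hpA a) ?_)
    (sum_le_sum fun a _ ↦ negMulLog_sum_le_sum_negMulLog (hpAB a))
    (sum_le_sum fun a _ ↦ sum_le_sum fun b _ ↦ negMulLog_sum_le_sum_negMulLog (hp a b)) ?_ ?_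
    (sum_negMulLog_submodular hp)
  · exact hsum ▸ single_le_sum (fun a _ ↦ hpA a) (mem_univ a)
  · simpa only [hsum, negMulLog_one, add_zero] using sum_negMulLog_subadditive hpAB
  · simpa only [sum_comm (γ := B)] using sum_negMulLog_submodular (p := fun b a c ↦ p a b c)
      fun b a c ↦ hp a b c

theorem entropy2_const {X : Type*} [Fintype X] (c : ℝ) :
    entropy2 (fun _ : X ↦ c) = Fintype.card X * negMulLog c / log 2 := by
  simp [entropy2]

theorem negMulLog_inv_two : negMulLog 2⁻¹ = log 2 / 2 := by
  rw [negMulLog, log_inv]; ring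

theorem shearer_triangle_general (α β γ : ℝ) (hβ : 0 ≤ β) (hγ : 0 ≤ γ) :
    (∀ (A B C : Type) [Fintype A] [Fintype B] [Fintype C] (p : A × B × C → ℝ),
      (∀ x, 0 ≤ p x) → (∑ x, p x) = 1 →
      entropy2 p ≤
        α * entropy2 (fun ab : A × B => ∑ c, p (ab.1, ab.2, c)) +
        β * entropy2 (fun bc : B × C => ∑ a, p (a, bc.1, bc.2)) +
        γ * entropy2 (fun ac : A × C => ∑ b, p (ac.1, b, ac.2)))
    ↔ (1 ≤ α + β ∧ 1 ≤ β + γ ∧ 1 ≤ α + γ) := by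
  have hlog : log 2 ≠ 0 := (log_pos one_lt_two).ne'
  constructor
  · intro h
    refine ⟨?_, ?_, ?_⟩
    · simpa [entropy2_const, negMulLog_inv_two, mul_div_cancel₀, hlog] using
        h Unit Bool Unit (fun _ ↦ 2⁻¹) (fun _ ↦ by norm_num) (by norm_num)
    · simpa [entropy2_const, negMulLog_inv_two, mul_div_cancel₀, hlog] using
        h Unit Unit Bool (fun _ ↦ 2⁻¹) (fun _ ↦ by norm_num) (by norm_num)
    · simpa [entropy2_const, negMulLog_inv_two, mul_div_cancel₀, hlog] using
        h Bool Unit Unit (fun _ ↦ 2⁻¹) (fun _ ↦ by norm_num) (by norm_num)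
  · rintro ⟨hαβ, hβγ, hαγ⟩ A B C _ _ _ p hp hsum
    have key := sum_negMulLog_le_shearer (p := fun a b c ↦ p (a, b, c)) (fun _ _ _ ↦ hp _)
      (by simpa only [Fintype.sum_prod_type] using hsum) hβ hγ hαβ hβγ hαγ
    simp only [entropy2, Fintype.sum_prod_type, mul_div_assoc', ← add_div]
    exact div_le_div_of_nonneg_right key (log_nonneg one_le_two)

/-- **Shearer's inequality for the triangle:** for nonnegative reals `α, β, γ`,
the inequality `H[A,B,C] ≤ α·H[A,B] + β·H[B,C] + γ·H[A,C]` holds for every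
triple of jointly distributed random variables taking finitely many values
iff `α+β ≥ 1`, `β+γ ≥ 1`, `α+γ ≥ 1`. -/
theorem shearer_triangle (α β γ : ℝ) (hα : 0 ≤ α) (hβ : 0 ≤ β) (hγ : 0 ≤ γ) :
    (∀ (A B C : Type) [Fintype A] [Fintype B] [Fintype C] (p : A × B × C → ℝ),
      (∀ x, 0 ≤ p x) → (∑ x, p x) = 1 →
      entropy2 p ≤
        α * entropy2 (fun ab : A × B => ∑ c, p (ab.1, ab.2, c)) +
        β * entropy2 (fun bc : B × C => ∑ a, p (a, bc.1, bc.2)) +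
        γ * entropy2 (fun ac : A × C => ∑ b, p (ac.1, b, ac.2)))
    ↔ (1 ≤ α + β ∧ 1 ≤ β + γ ∧ 1 ≤ α + γ) :=
  shearer_triangle_general α β γ hβ hγ
end

section
/- Shearer's inequality for polymatroids: Let H = ([n], E) be a hypergraph and δ = (δ_F)_{F∈E} a vector of nonnegative reals. The inequality h([n]) ≤ ∑_{F∈E} δ_F · h(F) holds for every polymatroid h on [n] if and only if δ is a fractional edge cover of H, i.e., ∑_{F∈E : v∈F} δ_F ≥ 1 for every v ∈ [n]. -/
/-!
For the forward direction, test the inequality on the polymatroid `S ↦ [v ∈ S]`.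
For the converse, order `[n]` and expand every `h F` by the chain rule as the sum over
`i ∈ F` of the increments `h(F_{≤ i}) - h(F_{< i})`. By submodularity the increment of `i` in
`[n]` is at most its increment in any `F ∋ i`, and it is nonnegative by monotonicity; so
`h [n] = ∑ᵢ cᵢ ≤ ∑ᵢ (∑_{F ∋ i} δ_F) cᵢ = ∑_F δ_F ∑_{i ∈ F} cᵢ ≤ ∑_F δ_F h F`.
-/

open Finset

/-- A polymatroid on `[n]`: a nonnegative set function with `h ∅ = 0` that is
monotone and submodular. -/
def IsPolymatroid {n : ℕ} (h : Finset (Fin n) → ℝ) : Prop :=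
  h ∅ = 0 ∧ (∀ S, 0 ≤ h S) ∧ (∀ X Y, X ⊆ Y → h X ≤ h Y) ∧
    (∀ X Y, h (X ∪ Y) + h (X ∩ Y) ≤ h X + h Y)

section ChainRule

variable {α : Type*} [LinearOrder α]

def prefixIncrement (h : Finset α → ℝ) (F : Finset α) (i : α) : ℝ :=
  h (F.filter (· ≤ i)) - h (F.filter (· < i))

theorem sum_prefixIncrement (h : Finset α → ℝ) (h0 : h ∅ = 0) (F : Finset α) :
    ∑ i ∈ F, prefixIncrement h F i = h F := by
  induction F using Finset.induction_on_max with
  | empty => simp [h0]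
  | insert a s has ih =>
    have hs : ∀ i ∈ s, prefixIncrement h (insert a s) i = prefixIncrement h s i := by
      intro i hi
      simp [prefixIncrement, filter_insert, not_le.2 (has i hi), not_lt.2 (has i hi).le]
    have hfilter_le : (insert a s).filter (· ≤ a) = insert a s :=
      filter_true_of_mem fun x hx => by
        rcases mem_insert.1 hx with rfl | hx
        exacts [le_rfl, (has x hx).le]
    have hfilter_lt : (insert a s).filter (· < a) = s := by
      simp [filter_insert, filter_true_of_mem has]
    rw [sum_insert fun ha => lt_irrefl a (has a ha), sum_congr rfl hs, ih,
      prefixIncrement, hfilter_le, hfilter_lt]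
    ring

theorem prefixIncrement_nonneg {h : Finset α → ℝ} (hmono : Monotone h) (F : Finset α) (i : α) :
    0 ≤ prefixIncrement h F i :=
  sub_nonneg.2 <| hmono <| monotone_filter_right F fun _ _ => le_of_lt

theorem prefixIncrement_le_of_subset {h : Finset α → ℝ}
    (hsub : ∀ X Y, h (X ∪ Y) + h (X ∩ Y) ≤ h X + h Y) {F G : Finset α} (hFG : F ⊆ G)
    {i : α} (hi : i ∈ F) : prefixIncrement h G i ≤ prefixIncrement h F i := by
  have hunion : F.filter (· ≤ i) ∪ G.filter (· < i) = G.filter (· ≤ i) := by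
    ext x
    simp only [mem_union, mem_filter]
    constructor
    · rintro (⟨hx, hxi⟩ | ⟨hx, hxi⟩)
      exacts [⟨hFG hx, hxi⟩, ⟨hx, hxi.le⟩]
    · rintro ⟨hx, hxi⟩
      rcases hxi.lt_or_eq with hxi | rfl
      exacts [Or.inr ⟨hx, hxi⟩, Or.inl ⟨hi, le_rfl⟩]
  have hinter : F.filter (· ≤ i) ∩ G.filter (· < i) = F.filter (· < i) := by
    ext x
    simp only [mem_inter, mem_filter]
    constructor
    · rintro ⟨⟨hx, -⟩, -, hxi⟩
      exact ⟨hx, hxi⟩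
    · rintro ⟨hx, hxi⟩
      exact ⟨⟨hx, hxi.le⟩, hFG hx, hxi⟩
  have := hsub (F.filter (· ≤ i)) (G.filter (· < i))
  rw [hunion, hinter] at this
  unfold prefixIncrement
  linarith

end ChainRule

theorem sum_mul_sum_filter_mem {α : Type*} [Fintype α] [DecidableEq α]
    (E : Finset (Finset α)) (δ : Finset α → ℝ) (c : α → ℝ) :
    ∑ i, (∑ F ∈ E.filter (fun F => i ∈ F), δ F) * c i = ∑ F ∈ E, δ F * ∑ i ∈ F, c i := by
  simp_rw [sum_mul, mul_sum]
  exact sum_comm' fun i F => by simp [and_comm]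

theorem le_sum_mul_of_fractional_cover {α : Type*} [Fintype α] [LinearOrder α]
    (E : Finset (Finset α)) (δ : Finset α → ℝ) (hδ : ∀ F ∈ E, 0 ≤ δ F)
    (hcover : ∀ v : α, 1 ≤ ∑ F ∈ E.filter (fun F => v ∈ F), δ F)
    (h : Finset α → ℝ) (h0 : h ∅ = 0) (hmono : Monotone h)
    (hsub : ∀ X Y, h (X ∪ Y) + h (X ∩ Y) ≤ h X + h Y) :
    h univ ≤ ∑ F ∈ E, δ F * h F := by
  set c := prefixIncrement h univ
  calc h univ = ∑ i, c i := (sum_prefixIncrement h h0 univ).symm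
    _ ≤ ∑ i, (∑ F ∈ E.filter (fun F => i ∈ F), δ F) * c i :=
        sum_le_sum fun i _ => le_mul_of_one_le_left (prefixIncrement_nonneg hmono _ _) (hcover i)
    _ = ∑ F ∈ E, δ F * ∑ i ∈ F, c i := sum_mul_sum_filter_mem E δ c
    _ ≤ ∑ F ∈ E, δ F * ∑ i ∈ F, prefixIncrement h F i :=
        sum_le_sum fun F hF => mul_le_mul_of_nonneg_left
          (sum_le_sum fun i hi => prefixIncrement_le_of_subset hsub (subset_univ F) hi) (hδ F hF)
    _ = ∑ F ∈ E, δ F * h F := by simp_rw [sum_prefixIncrement h h0]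

theorem isPolymatroid_indicator_mem {n : ℕ} (v : Fin n) :
    IsPolymatroid fun S : Finset (Fin n) => if v ∈ S then (1 : ℝ) else 0 := by
  refine ⟨by simp, fun S => by positivity, fun X Y hXY => ?_, fun X Y => ?_⟩
  · by_cases hX : v ∈ X
    · simp [hX, hXY hX]
    · simp only [hX, if_false]
      positivity
  · by_cases hX : v ∈ X <;> by_cases hY : v ∈ Y <;> simp [hX, hY]

/-- **Shearer's inequality for polymatroids:** given a hypergraph `([n], E)` and
nonnegative coefficients `δ`, the inequality `h([n]) ≤ ∑_{F ∈ E} δ_F h(F)` holds for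
every polymatroid `h` iff `δ` is a fractional edge cover of the hypergraph. -/
theorem shearer_polymatroid {n : ℕ} (E : Finset (Finset (Fin n)))
    (δ : Finset (Fin n) → ℝ) (hδ : ∀ F ∈ E, 0 ≤ δ F) :
    (∀ h : Finset (Fin n) → ℝ, IsPolymatroid h →
        h Finset.univ ≤ ∑ F ∈ E, δ F * h F)
    ↔ (∀ v : Fin n, 1 ≤ ∑ F ∈ E.filter (fun F => v ∈ F), δ F) := by
  refine ⟨fun hshearer v => ?_, fun hcover h ⟨h0, _, hmono, hsub⟩ => ?_⟩
  · simpa [sum_filter] using hshearer _ (isPolymatroid_indicator_mem v)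
  · exact le_sum_mul_of_fractional_cover E δ hδ hcover h h0 (fun _ _ => hmono _ _) hsub
end

section
/- Polymatroid bound: Let Q be a full conjunctive query with multi-hypergraph H = ([n], E) and let DC be a set of degree constraints. For every database D satisfying DC, log₂ |Q(D)| ≤ sup { h([n]) : h is a polymatroid on [n] with h(Y) − h(X) ≤ log₂ N_{Y|X} for every (X, Y, N_{Y|X}) ∈ DC }. -/
set_option maxHeartbeats 1000000


open Finset

/-- Restriction of a partial tuple on `T` to a subset `S ⊆ T`. -/
def restrictTuple {n : ℕ} {Dom : Fin n → Type*} {S T : Finset (Fin n)} (hST : S ⊆ T)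
    (b : (i : {x // x ∈ T}) → Dom i.val) : (i : {x // x ∈ S}) → Dom i.val :=
  fun i => b ⟨i.val, hST i.property⟩

section Aux
open scoped Classical

variable {n : ℕ} {Dom : Fin n → Type*}

/-- Projection of a full tuple to a subset of coordinates. -/
def projT (S : Finset (Fin n)) (a : ∀ i, Dom i) : (i : {x // x ∈ S}) → Dom i.val :=
  fun i => a i.val

lemma restrict_projT {S T : Finset (Fin n)} (hST : S ⊆ T) (a : ∀ i, Dom i) :
    restrictTuple hST (projT T a) = projT S a := rfl

lemma projT_mono {S T : Finset (Fin n)} (hST : S ⊆ T) {a b : ∀ i, Dom i}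
    (h : projT T b = projT T a) : projT S b = projT S a := by
  rw [← restrict_projT hST, ← restrict_projT hST, h]

variable (Q : Finset (∀ i, Dom i))

/-- Fiber of a tuple under projection to `S`, inside `Q`. -/
noncomputable def fib (S : Finset (Fin n)) (a : ∀ i, Dom i) : Finset (∀ i, Dom i) :=
  Q.filter (fun b => projT S b = projT S a)

lemma mem_fib {S : Finset (Fin n)} {a b : ∀ i, Dom i} :
    b ∈ fib Q S a ↔ b ∈ Q ∧ projT S b = projT S a := by
  simp [fib]

noncomputable def mQ (S : Finset (Fin n)) (a : ∀ i, Dom i) : ℕ := (fib Q S a).card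

/-- Number of tuples in `Q` whose `S`-projection equals `u`. -/
noncomputable def cnt (S : Finset (Fin n)) (u : (i : {x // x ∈ S}) → Dom i.val) : ℕ :=
  (Q.filter (fun b => projT S b = u)).card

lemma mQ_eq_cnt (S : Finset (Fin n)) (a : ∀ i, Dom i) : mQ Q S a = cnt Q S (projT S a) := rfl

variable {Q}

lemma self_mem_fib {S : Finset (Fin n)} {a : ∀ i, Dom i} (ha : a ∈ Q) : a ∈ fib Q S a :=
  (mem_fib Q).2 ⟨ha, rfl⟩

lemma one_le_mQ {S : Finset (Fin n)} {a : ∀ i, Dom i} (ha : a ∈ Q) : 1 ≤ mQ Q S a :=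
  Finset.card_pos.2 ⟨a, self_mem_fib ha⟩

lemma mQ_le {S : Finset (Fin n)} (a : ∀ i, Dom i) : mQ Q S a ≤ Q.card :=
  Finset.card_le_card (Finset.filter_subset _ _)

lemma fib_anti {S T : Finset (Fin n)} (hST : S ⊆ T) (a : ∀ i, Dom i) :
    fib Q T a ⊆ fib Q S a := by
  intro b hb
  rw [mem_fib] at hb ⊢
  exact ⟨hb.1, projT_mono hST hb.2⟩

lemma mQ_anti {S T : Finset (Fin n)} (hST : S ⊆ T) (a : ∀ i, Dom i) :
    mQ Q T a ≤ mQ Q S a := Finset.card_le_card (fib_anti hST a)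

lemma fib_congr {S : Finset (Fin n)} {a b : ∀ i, Dom i} (hb : b ∈ fib Q S a) :
    fib Q S b = fib Q S a := by
  rw [mem_fib] at hb
  ext c
  rw [mem_fib, mem_fib, hb.2]

lemma fib_empty (a : ∀ i, Dom i) : fib Q ∅ a = Q := by
  apply Finset.filter_true_of_mem
  intro b _
  funext i
  exact absurd i.property (Finset.notMem_empty _)

lemma fib_univ {a : ∀ i, Dom i} (ha : a ∈ Q) : fib Q Finset.univ a = {a} := by
  ext b
  rw [mem_fib, Finset.mem_singleton]
  constructor
  · rintro ⟨-, h⟩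
    funext i
    exact congrFun h ⟨i, Finset.mem_univ i⟩
  · rintro rfl
    exact ⟨ha, rfl⟩


/-- Entropy of the uniform distribution on `Q`, projected to coordinates `S`, base 2. -/
noncomputable def ent (Q : Finset (∀ i, Dom i)) (S : Finset (Fin n)) : ℝ :=
  (Q.card : ℝ)⁻¹ * ∑ a ∈ Q, Real.logb 2 ((Q.card : ℝ) / (mQ Q S a))

lemma ent_nonneg (Q : Finset (∀ i, Dom i)) (S : Finset (Fin n)) : 0 ≤ ent Q S := by
  apply mul_nonneg (by positivity)
  apply Finset.sum_nonneg
  intro a ha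
  apply Real.logb_nonneg one_lt_two
  have h1 : (0:ℝ) < mQ Q S a := by exact_mod_cast one_le_mQ ha
  rw [one_le_div h1]
  exact_mod_cast mQ_le a

lemma ent_empty (Q : Finset (∀ i, Dom i)) : ent Q (∅ : Finset (Fin n)) = 0 := by
  rcases Q.eq_empty_or_nonempty with rfl | hne
  · simp [ent]
  · have hN : (Q.card : ℝ) ≠ 0 := by
      exact_mod_cast Finset.card_ne_zero_of_mem hne.choose_spec
    rw [ent]
    rw [Finset.sum_eq_zero, mul_zero]
    intro a ha
    rw [mQ, fib_empty, div_self hN, Real.logb_one]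

lemma ent_mono (Q : Finset (∀ i, Dom i)) {S T : Finset (Fin n)} (hST : S ⊆ T) :
    ent Q S ≤ ent Q T := by
  apply mul_le_mul_of_nonneg_left _ (by positivity)
  apply Finset.sum_le_sum
  intro a ha
  have h1 : (0:ℝ) < mQ Q T a := by exact_mod_cast one_le_mQ ha
  have h2 : (0:ℝ) < mQ Q S a := by exact_mod_cast one_le_mQ ha
  have hle : (mQ Q T a : ℝ) ≤ mQ Q S a := by exact_mod_cast mQ_anti hST a
  have hQpos : (0:ℝ) < Q.card := by
    exact_mod_cast Finset.card_pos.2 ⟨a, ha⟩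
  apply Real.logb_le_logb_of_le one_lt_two (by positivity)
  exact div_le_div_of_nonneg_left hQpos.le h1 hle

lemma ent_univ {Q : Finset (∀ i, Dom i)} (hne : Q.Nonempty) :
    ent Q Finset.univ = Real.logb 2 (Q.card : ℝ) := by
  have hN : (Q.card : ℝ) ≠ 0 := by exact_mod_cast hne.card_pos.ne'
  rw [ent, Finset.sum_congr rfl (fun a ha => ?_), Finset.sum_const, nsmul_eq_mul,
    ← mul_assoc, inv_mul_cancel₀ hN, one_mul]
  rw [mQ, fib_univ ha, Finset.card_singleton, Nat.cast_one, div_one]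

/-- Jensen's inequality for `log`, uniform weights. -/
lemma jensen_log {α : Type*} {Q : Finset α} (hne : Q.Nonempty) {t : α → ℝ}
    (ht : ∀ a ∈ Q, 0 < t a) :
    (Q.card : ℝ)⁻¹ * ∑ a ∈ Q, Real.log (t a) ≤
      Real.log ((Q.card : ℝ)⁻¹ * ∑ a ∈ Q, t a) := by
  have hN : (Q.card : ℝ) ≠ 0 := by exact_mod_cast hne.card_pos.ne'
  have := (strictConcaveOn_log_Ioi.concaveOn).le_map_sum
    (t := Q) (w := fun _ => (Q.card : ℝ)⁻¹) (p := t)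
    (fun a _ => by positivity)
    (by rw [Finset.sum_const, nsmul_eq_mul, mul_inv_cancel₀ hN])
    (fun a ha => Set.mem_Ioi.2 (ht a ha))
  simpa [smul_eq_mul, Finset.mul_sum] using this

lemma jensen_logb {α : Type*} {Q : Finset α} (hne : Q.Nonempty) {t : α → ℝ}
    (ht : ∀ a ∈ Q, 0 < t a) :
    (Q.card : ℝ)⁻¹ * ∑ a ∈ Q, Real.logb 2 (t a) ≤
      Real.logb 2 ((Q.card : ℝ)⁻¹ * ∑ a ∈ Q, t a) := by
  have h := jensen_log hne ht
  rw [Real.logb]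
  simp only [Real.logb]
  rw [← Finset.sum_div, ← mul_div_assoc]
  gcongr

/-- Key counting bound: if every `X`-fiber has at most `K` distinct `Y`-projections,
then `∑ m_X/m_Y ≤ K·|Q|`. -/
lemma sum_ratio_le {Q : Finset (∀ i, Dom i)} {X Y : Finset (Fin n)} (hXY : X ⊆ Y) {K : ℕ}
    (hK : ∀ a ∈ Q, ((fib Q X a).image (projT Y)).card ≤ K) :
    ∑ a ∈ Q, (mQ Q X a : ℝ) / (mQ Q Y a) ≤ (K : ℝ) * Q.card := by
  rw [← Finset.sum_fiberwise_of_maps_to (g := projT X) (t := Q.image (projT X))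
      (fun a ha => Finset.mem_image_of_mem _ ha) (fun a => (mQ Q X a : ℝ) / (mQ Q Y a))]
  have hcard : (Q.card : ℝ)
      = ∑ x ∈ Q.image (projT X), ((Q.filter (fun a => projT X a = x)).card : ℝ) := by
    rw_mod_cast [Finset.card_eq_sum_card_fiberwise
      (t := Q.image (projT X)) (f := projT X) (fun a ha => Finset.mem_image_of_mem _ ha)]
  rw [hcard, Finset.mul_sum]
  apply Finset.sum_le_sum
  intro x hx
  obtain ⟨a₀, ha₀, rfl⟩ := Finset.mem_image.1 hx
  have hCfib : Q.filter (fun a => projT X a = projT X a₀) = fib Q X a₀ := by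
    ext b; simp [fib]
  rw [hCfib]
  set C := fib Q X a₀ with hC
  rw [← Finset.sum_fiberwise_of_maps_to (g := projT Y) (t := C.image (projT Y))
      (fun a ha => Finset.mem_image_of_mem _ ha) (fun a => (mQ Q X a : ℝ) / (mQ Q Y a))]
  have hinner : ∀ y ∈ C.image (projT Y),
      ∑ a ∈ C.filter (fun a => projT Y a = y), (mQ Q X a : ℝ) / (mQ Q Y a)
        = (C.card : ℝ) := by
    intro y hy
    obtain ⟨a₁, ha₁, rfl⟩ := Finset.mem_image.1 hy
    have hfibY : ∀ a ∈ C.filter (fun b => projT Y b = projT Y a₁),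
        fib Q Y a = C.filter (fun b => projT Y b = projT Y a₁) := by
      intro a ha
      rw [Finset.mem_filter] at ha
      have haC := (mem_fib Q).1 ha.1
      ext b
      rw [mem_fib, Finset.mem_filter, hC, mem_fib, ha.2]
      constructor
      · rintro ⟨hbQ, hby⟩
        exact ⟨⟨hbQ, (projT_mono hXY (hby.trans ha.2.symm)).trans haC.2⟩, hby⟩
      · rintro ⟨⟨hbQ, -⟩, hby⟩
        exact ⟨hbQ, hby⟩
    have ha₁L : a₁ ∈ C.filter (fun b => projT Y b = projT Y a₁) :=
      Finset.mem_filter.2 ⟨ha₁, rfl⟩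
    have hLpos : (0:ℝ) < ((C.filter (fun b => projT Y b = projT Y a₁)).card : ℝ) := by
      exact_mod_cast Finset.card_pos.2 ⟨a₁, ha₁L⟩
    rw [Finset.sum_congr rfl (fun a ha => ?_), Finset.sum_const, nsmul_eq_mul,
      mul_div_cancel₀ _ hLpos.ne']
    rw [show mQ Q X a = C.card from by rw [mQ, fib_congr (Finset.mem_filter.1 ha).1],
      show mQ Q Y a = (C.filter (fun b => projT Y b = projT Y a₁)).card from by
        rw [mQ, hfibY a ha]]
  rw [Finset.sum_congr rfl hinner, Finset.sum_const, nsmul_eq_mul]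
  have hKimg : ((C.image (projT Y)).card : ℝ) ≤ (K : ℝ) := by exact_mod_cast hK a₀ ha₀
  exact mul_le_mul_of_nonneg_right hKimg (by positivity)


lemma filter_proj_eq_of_subset {Q : Finset (∀ i, Dom i)} {S T : Finset (Fin n)} (hST : S ⊆ T)
    {a₀ a : ∀ i, Dom i} (ha : a ∈ fib Q S a₀) :
    Q.filter (fun b => projT T b = projT T a)
      = (fib Q S a₀).filter (fun b => projT T b = projT T a) := by
  ext b
  simp only [Finset.mem_filter, mem_fib]
  constructor
  · rintro ⟨hbQ, hb⟩
    exact ⟨⟨hbQ, (projT_mono hST hb).trans ((mem_fib Q).1 ha).2⟩, hb⟩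
  · rintro ⟨⟨hbQ, -⟩, hb⟩
    exact ⟨hbQ, hb⟩

/-- Key counting bound for submodularity. -/
lemma sum_submod_le (Q : Finset (∀ i, Dom i)) (X Y : Finset (Fin n)) :
    ∑ a ∈ Q, ((mQ Q X a : ℝ) * mQ Q Y a) / ((mQ Q (X ∪ Y) a : ℝ) * mQ Q (X ∩ Y) a)
      ≤ (Q.card : ℝ) := by
  have hIX : X ∩ Y ⊆ X := Finset.inter_subset_left
  have hIY : X ∩ Y ⊆ Y := Finset.inter_subset_right
  have hIU : X ∩ Y ⊆ X ∪ Y := hIX.trans Finset.subset_union_left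
  have hXU : X ⊆ X ∪ Y := Finset.subset_union_left
  have hYU : Y ⊆ X ∪ Y := Finset.subset_union_right
  rw [← Finset.sum_fiberwise_of_maps_to (g := projT (X ∩ Y)) (t := Q.image (projT (X ∩ Y)))
      (fun a ha => Finset.mem_image_of_mem _ ha)
      (fun a => ((mQ Q X a : ℝ) * mQ Q Y a) / ((mQ Q (X ∪ Y) a : ℝ) * mQ Q (X ∩ Y) a))]
  have hcard : (Q.card : ℝ)
      = ∑ z ∈ Q.image (projT (X ∩ Y)),
          ((Q.filter (fun a => projT (X ∩ Y) a = z)).card : ℝ) := by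
    rw_mod_cast [Finset.card_eq_sum_card_fiberwise
      (t := Q.image (projT (X ∩ Y))) (f := projT (X ∩ Y))
      (fun a ha => Finset.mem_image_of_mem _ ha)]
  rw [hcard]
  apply Finset.sum_le_sum
  intro z hz
  obtain ⟨a₀, ha₀, rfl⟩ := Finset.mem_image.1 hz
  have hZfib : Q.filter (fun a => projT (X ∩ Y) a = projT (X ∩ Y) a₀)
      = fib Q (X ∩ Y) a₀ := by
    ext b; simp [fib]
  rw [hZfib]
  set Z := fib Q (X ∩ Y) a₀ with hZ
  have hZpos : (0:ℝ) < (Z.card : ℝ) := by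
    exact_mod_cast Finset.card_pos.2 ⟨a₀, self_mem_fib ha₀⟩
  rw [← Finset.sum_fiberwise_of_maps_to (g := projT (X ∪ Y)) (t := Z.image (projT (X ∪ Y)))
      (fun a ha => Finset.mem_image_of_mem _ ha)
      (fun a => ((mQ Q X a : ℝ) * mQ Q Y a) / ((mQ Q (X ∪ Y) a : ℝ) * mQ Q (X ∩ Y) a))]
  have hinner : ∀ w ∈ Z.image (projT (X ∪ Y)),
      ∑ a ∈ Z.filter (fun b => projT (X ∪ Y) b = w),
        ((mQ Q X a : ℝ) * mQ Q Y a) / ((mQ Q (X ∪ Y) a : ℝ) * mQ Q (X ∩ Y) a)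
      = ((cnt Q X (restrictTuple hXU w) : ℝ) * cnt Q Y (restrictTuple hYU w)) / Z.card := by
    intro w hw
    obtain ⟨a₂, ha₂, rfl⟩ := Finset.mem_image.1 hw
    set L := Z.filter (fun b => projT (X ∪ Y) b = projT (X ∪ Y) a₂) with hL
    have ha₂L : a₂ ∈ L := Finset.mem_filter.2 ⟨ha₂, rfl⟩
    have hLpos : (0:ℝ) < (L.card : ℝ) := by
      exact_mod_cast Finset.card_pos.2 ⟨a₂, ha₂L⟩
    have hLQ : Q.filter (fun b => projT (X ∪ Y) b = projT (X ∪ Y) a₂) = L := by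
      rw [hL, hZ]
      exact filter_proj_eq_of_subset hIU ha₂
    have hterm : ∀ a ∈ L,
        ((mQ Q X a : ℝ) * mQ Q Y a) / ((mQ Q (X ∪ Y) a : ℝ) * mQ Q (X ∩ Y) a)
        = ((cnt Q X (restrictTuple hXU (projT (X ∪ Y) a₂)) : ℝ)
            * cnt Q Y (restrictTuple hYU (projT (X ∪ Y) a₂))) / ((L.card : ℝ) * Z.card) := by
      intro a ha
      have haL := Finset.mem_filter.1 ha
      have haZ := haL.1
      have haU : projT (X ∪ Y) a = projT (X ∪ Y) a₂ := haL.2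
      have hX' : projT X a = restrictTuple hXU (projT (X ∪ Y) a₂) := by
        rw [← haU, restrict_projT hXU]
      have hY' : projT Y a = restrictTuple hYU (projT (X ∪ Y) a₂) := by
        rw [← haU, restrict_projT hYU]
      have hmI : mQ Q (X ∩ Y) a = Z.card := by
        rw [mQ, hZ, fib_congr haZ]
      have hmU : mQ Q (X ∪ Y) a = L.card := by
        rw [mQ_eq_cnt, congrArg (cnt Q (X ∪ Y)) haU, cnt, hLQ]
      have hmX : mQ Q X a = cnt Q X (restrictTuple hXU (projT (X ∪ Y) a₂)) := by
        rw [mQ_eq_cnt, hX']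
      have hmY : mQ Q Y a = cnt Q Y (restrictTuple hYU (projT (X ∪ Y) a₂)) := by
        rw [mQ_eq_cnt, hY']
      rw [hmI, hmU, hmX, hmY]
    rw [Finset.sum_congr rfl hterm, Finset.sum_const, nsmul_eq_mul]
    field_simp
  rw [Finset.sum_congr rfl hinner, ← Finset.sum_div, div_le_iff₀ hZpos]
  -- now a purely combinatorial bound, proved in ℕ
  have hnat : ∑ w ∈ Z.image (projT (X ∪ Y)),
      cnt Q X (restrictTuple hXU w) * cnt Q Y (restrictTuple hYU w)
        ≤ Z.card * Z.card := by
    have hinj : ∀ w ∈ Z.image (projT (X ∪ Y)), ∀ w' ∈ Z.image (projT (X ∪ Y)),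
        (fun w => (restrictTuple hXU w, restrictTuple hYU w)) w
          = (fun w => (restrictTuple hXU w, restrictTuple hYU w)) w' → w = w' := by
      intro w _ w' _ hφ
      simp only [Prod.mk.injEq] at hφ
      funext i
      rcases Finset.mem_union.1 i.property with h | h
      · exact congrFun hφ.1 ⟨i.val, h⟩
      · exact congrFun hφ.2 ⟨i.val, h⟩
    have hsumcnt : ∀ (S : Finset (Fin n)), X ∩ Y ⊆ S →
        ∑ u ∈ Z.image (projT S), cnt Q S u = Z.card := by
      intro S hS
      rw [Finset.card_eq_sum_card_fiberwise (t := Z.image (projT S)) (f := projT S)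
        (fun a ha => Finset.mem_image_of_mem _ ha)]
      apply Finset.sum_congr rfl
      intro u hu
      obtain ⟨a, haZ, rfl⟩ := Finset.mem_image.1 hu
      rw [cnt, hZ, filter_proj_eq_of_subset hS haZ]
    calc ∑ w ∈ Z.image (projT (X ∪ Y)),
          cnt Q X (restrictTuple hXU w) * cnt Q Y (restrictTuple hYU w)
        = ∑ p ∈ (Z.image (projT (X ∪ Y))).image
            (fun w => (restrictTuple hXU w, restrictTuple hYU w)),
            cnt Q X p.1 * cnt Q Y p.2 :=
            (Finset.sum_image (f := fun p : ((i : {x // x ∈ X}) → Dom i.val) × ((i : {x // x ∈ Y}) → Dom i.val) => cnt Q X p.1 * cnt Q Y p.2) hinj).symm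
      _ ≤ ∑ p ∈ (Z.image (projT X)) ×ˢ (Z.image (projT Y)),
            cnt Q X p.1 * cnt Q Y p.2 := by
          apply Finset.sum_le_sum_of_subset
          intro p hp
          obtain ⟨w, hw, rfl⟩ := Finset.mem_image.1 hp
          obtain ⟨a, haZ, rfl⟩ := Finset.mem_image.1 hw
          rw [Finset.mem_product]
          exact ⟨by rw [restrict_projT hXU]; exact Finset.mem_image_of_mem _ haZ,
            by rw [restrict_projT hYU]; exact Finset.mem_image_of_mem _ haZ⟩
      _ = (∑ u ∈ Z.image (projT X), cnt Q X u)
            * (∑ v ∈ Z.image (projT Y), cnt Q Y v) := by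
          rw [Finset.sum_mul_sum, Finset.sum_product]
      _ = Z.card * Z.card := by rw [hsumcnt X hIX, hsumcnt Y hIY]
  calc ∑ w ∈ Z.image (projT (X ∪ Y)),
        ((cnt Q X (restrictTuple hXU w) : ℝ) * cnt Q Y (restrictTuple hYU w))
      = ((∑ w ∈ Z.image (projT (X ∪ Y)),
          cnt Q X (restrictTuple hXU w) * cnt Q Y (restrictTuple hYU w) : ℕ) : ℝ) := by
        push_cast
        rfl
    _ ≤ ((Z.card * Z.card : ℕ) : ℝ) := by exact_mod_cast hnat
    _ = (Z.card : ℝ) * Z.card := by push_cast; rfl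

lemma ent_sub_ent {Q : Finset (∀ i, Dom i)} (S T : Finset (Fin n)) :
    ent Q T - ent Q S = (Q.card : ℝ)⁻¹ *
      ∑ a ∈ Q, Real.logb 2 ((mQ Q S a : ℝ) / (mQ Q T a)) := by
  rw [ent, ent, ← mul_sub, ← Finset.sum_sub_distrib]
  congr 1
  apply Finset.sum_congr rfl
  intro a ha
  have hS : (0:ℝ) < mQ Q S a := by exact_mod_cast one_le_mQ ha
  have hT : (0:ℝ) < mQ Q T a := by exact_mod_cast one_le_mQ ha
  have hN : (0:ℝ) < Q.card := by exact_mod_cast Finset.card_pos.2 ⟨a, ha⟩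
  rw [Real.logb_div hN.ne' hT.ne', Real.logb_div hN.ne' hS.ne',
    Real.logb_div hS.ne' hT.ne']
  ring

lemma ent_constraint {Q : Finset (∀ i, Dom i)} (hne : Q.Nonempty) {X Y : Finset (Fin n)}
    (hXY : X ⊆ Y) {K : ℕ}
    (hK : ∀ a ∈ Q, ((fib Q X a).image (projT Y)).card ≤ K) :
    ent Q Y - ent Q X ≤ Real.logb 2 (K : ℝ) := by
  have hN : (0:ℝ) < Q.card := by exact_mod_cast hne.card_pos
  have hpos : ∀ a ∈ Q, 0 < (mQ Q X a : ℝ) / (mQ Q Y a) := by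
    intro a ha
    have h1 : (0:ℝ) < mQ Q X a := by exact_mod_cast one_le_mQ ha
    have h2 : (0:ℝ) < mQ Q Y a := by exact_mod_cast one_le_mQ ha
    positivity
  have hKpos : 0 < K := by
    obtain ⟨a, ha⟩ := hne
    calc 0 < ((fib Q X a).image (projT Y)).card :=
          Finset.card_pos.2 ⟨projT Y a, Finset.mem_image_of_mem _ (self_mem_fib ha)⟩
      _ ≤ K := hK a ha
  rw [ent_sub_ent]
  calc (Q.card : ℝ)⁻¹ * ∑ a ∈ Q, Real.logb 2 ((mQ Q X a : ℝ) / (mQ Q Y a))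
      ≤ Real.logb 2 ((Q.card : ℝ)⁻¹ * ∑ a ∈ Q, (mQ Q X a : ℝ) / (mQ Q Y a)) :=
        jensen_logb hne hpos
    _ ≤ Real.logb 2 ((Q.card : ℝ)⁻¹ * ((K : ℝ) * Q.card)) := by
        apply Real.logb_le_logb_of_le one_lt_two
        · exact mul_pos (by positivity) (Finset.sum_pos hpos hne)
        · exact mul_le_mul_of_nonneg_left (sum_ratio_le hXY hK) (by positivity)
    _ = Real.logb 2 (K : ℝ) := by
        congr 1
        field_simp

lemma ent_submod (Q : Finset (∀ i, Dom i)) (X Y : Finset (Fin n)) :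
    ent Q (X ∪ Y) + ent Q (X ∩ Y) ≤ ent Q X + ent Q Y := by
  rcases Q.eq_empty_or_nonempty with rfl | hne
  · simp [ent]
  have hN : (0:ℝ) < Q.card := by exact_mod_cast hne.card_pos
  have hpos : ∀ a ∈ Q, 0 < ((mQ Q X a : ℝ) * mQ Q Y a)
      / ((mQ Q (X ∪ Y) a : ℝ) * mQ Q (X ∩ Y) a) := by
    intro a ha
    have h1 : (0:ℝ) < mQ Q X a := by exact_mod_cast one_le_mQ ha
    have h2 : (0:ℝ) < mQ Q Y a := by exact_mod_cast one_le_mQ ha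
    have h3 : (0:ℝ) < mQ Q (X ∪ Y) a := by exact_mod_cast one_le_mQ ha
    have h4 : (0:ℝ) < mQ Q (X ∩ Y) a := by exact_mod_cast one_le_mQ ha
    exact div_pos (mul_pos h1 h2) (mul_pos h3 h4)
  have hsum : ent Q (X ∪ Y) + ent Q (X ∩ Y) - ent Q X - ent Q Y
      = (Q.card : ℝ)⁻¹ * ∑ a ∈ Q, Real.logb 2
          (((mQ Q X a : ℝ) * mQ Q Y a) / ((mQ Q (X ∪ Y) a : ℝ) * mQ Q (X ∩ Y) a)) := by
    rw [ent, ent, ent, ent, ← mul_add, ← mul_sub, ← mul_sub,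
      ← Finset.sum_add_distrib, ← Finset.sum_sub_distrib, ← Finset.sum_sub_distrib]
    congr 1
    apply Finset.sum_congr rfl
    intro a ha
    have h1 : (0:ℝ) < mQ Q X a := by exact_mod_cast one_le_mQ ha
    have h2 : (0:ℝ) < mQ Q Y a := by exact_mod_cast one_le_mQ ha
    have h3 : (0:ℝ) < mQ Q (X ∪ Y) a := by exact_mod_cast one_le_mQ ha
    have h4 : (0:ℝ) < mQ Q (X ∩ Y) a := by exact_mod_cast one_le_mQ ha
    rw [Real.logb_div hN.ne' h3.ne', Real.logb_div hN.ne' h4.ne',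
      Real.logb_div hN.ne' h1.ne', Real.logb_div hN.ne' h2.ne',
      Real.logb_div (by positivity : ((mQ Q X a : ℝ) * mQ Q Y a) ≠ 0)
        (by positivity : ((mQ Q (X ∪ Y) a : ℝ) * mQ Q (X ∩ Y) a) ≠ 0),
      Real.logb_mul h1.ne' h2.ne', Real.logb_mul h3.ne' h4.ne']
    ring
  have hle : ent Q (X ∪ Y) + ent Q (X ∩ Y) - ent Q X - ent Q Y ≤ 0 := by
    rw [hsum]
    calc (Q.card : ℝ)⁻¹ * ∑ a ∈ Q, Real.logb 2
          (((mQ Q X a : ℝ) * mQ Q Y a) / ((mQ Q (X ∪ Y) a : ℝ) * mQ Q (X ∩ Y) a))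
        ≤ Real.logb 2 ((Q.card : ℝ)⁻¹ * ∑ a ∈ Q,
            ((mQ Q X a : ℝ) * mQ Q Y a) / ((mQ Q (X ∪ Y) a : ℝ) * mQ Q (X ∩ Y) a)) :=
          jensen_logb hne hpos
      _ ≤ Real.logb 2 ((Q.card : ℝ)⁻¹ * Q.card) := by
          apply Real.logb_le_logb_of_le one_lt_two
          · exact mul_pos (by positivity) (Finset.sum_pos hpos hne)
          · exact mul_le_mul_of_nonneg_left (sum_submod_le Q X Y) (by positivity)
      _ = 0 := by rw [inv_mul_cancel₀ hN.ne', Real.logb_one]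
  linarith

end Aux

/-- **Polymatroid bound.** If the database satisfies the degree constraints `DC`
(each constraint `(X, Y, N)`, `X ⊊ Y`, `N ≥ 1`, guarded by some input relation),
then `log₂ |Q(D)|` is at most the supremum of `h([n])` over all polymatroids `h`
with `h(Y) − h(X) ≤ log₂ N` for every `(X, Y, N) ∈ DC`. -/
theorem polymatroid_bound
    {n : ℕ} (hn : 1 ≤ n) {Dom : Fin n → Type*}
    {ι : Type*} [Fintype ι]
    (F : ι → Finset (Fin n)) (hFne : ∀ e : ι, (F e).Nonempty)
    (R : (e : ι) → Finset ((i : {x // x ∈ F e}) → Dom i.val))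
    (DC : Finset (Finset (Fin n) × Finset (Fin n) × ℕ))
    (hDCvalid : ∀ c ∈ DC, c.1 ⊂ c.2.1 ∧ 1 ≤ c.2.2)
    (hguard : ∀ c ∈ DC, ∃ (e : ι) (hX : c.1 ⊆ F e) (hY : c.2.1 ⊆ F e),
        ∀ t : (i : {x // x ∈ c.1}) → Dom i.val,
          Set.ncard {y : (i : {x // x ∈ c.2.1}) → Dom i.val |
              ∃ b ∈ R e, restrictTuple hX b = t ∧ restrictTuple hY b = y} ≤ c.2.2)
    (Q : Finset (∀ i, Dom i))
    (hQ : ∀ a : ∀ i, Dom i, a ∈ Q ↔ ∀ e : ι, (fun i : {x // x ∈ F e} => a i.val) ∈ R e) :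
    (Real.logb 2 (Q.card : ℝ) : EReal) ≤
      sSup {x : EReal | ∃ h : Finset (Fin n) → ℝ, IsPolymatroid h ∧
        (∀ c ∈ DC, h c.2.1 - h c.1 ≤ Real.logb 2 (c.2.2 : ℝ)) ∧
        x = (h Finset.univ : ℝ)} := by
  classical
  rcases Q.eq_empty_or_nonempty with rfl | hne
  · apply le_sSup
    refine ⟨fun _ => 0, ⟨rfl, fun _ => le_rfl, fun _ _ _ => le_rfl,
      fun _ _ => by norm_num⟩, fun c hc => ?_, by simp⟩
    simpa using Real.logb_nonneg one_lt_two
      (by exact_mod_cast (hDCvalid c hc).2 : (1:ℝ) ≤ (c.2.2 : ℝ))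
  · apply le_sSup
    refine ⟨ent Q, ⟨ent_empty Q, ent_nonneg Q, fun X Y hXY => ent_mono Q hXY,
      fun X Y => ent_submod Q X Y⟩, ?_, ?_⟩
    · intro c hc
      obtain ⟨e, hXe, hYe, hg⟩ := hguard c hc
      apply ent_constraint hne (hDCvalid c hc).1.subset
      intro a ha
      have hsub : (((fib Q c.1 a).image (projT c.2.1) : Finset _) : Set _) ⊆
          {y | ∃ b ∈ R e, restrictTuple hXe b = projT c.1 a ∧ restrictTuple hYe b = y} := by
        intro y hy
        simp only [Finset.coe_image, Set.mem_image, Finset.mem_coe] at hy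
        obtain ⟨b', hb', rfl⟩ := hy
        rw [mem_fib] at hb'
        refine ⟨projT (F e) b', (hQ b').1 hb'.1 e, ?_, ?_⟩
        · rw [restrict_projT hXe, hb'.2]
        · rw [restrict_projT hYe]
      have hfin : {y | ∃ b ∈ R e,
          restrictTuple hXe b = projT c.1 a ∧ restrictTuple hYe b = y}.Finite := by
        apply Set.Finite.subset ((R e).finite_toSet.image (restrictTuple hYe))
        rintro y ⟨b, hb, -, rfl⟩
        exact Set.mem_image_of_mem _ hb
      calc ((fib Q c.1 a).image (projT c.2.1)).card
          = (((fib Q c.1 a).image (projT c.2.1) : Finset _) : Set _).ncard :=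
            (Set.ncard_coe_finset _).symm
        _ ≤ _ := Set.ncard_le_ncard hsub hfin
        _ ≤ c.2.2 := hg (projT c.1 a)
    · exact congrArg Real.toEReal (ent_univ hne).symm
end

section
/- Collapse of the polymatroid bound to a modular bound under acyclic degree constraints: Let DC be a set of degree constraints over [n] such that the identity order (1,…,n) is compatible with DC, i.e., for every (X, Y, N_{Y|X}) ∈ DC and every x ∈ X, y ∈ Y∖X, we have x < y. Let h* be any polymatroid on [n] with h*(Y) − h*(X) ≤ log₂ N_{Y|X} for all (X, Y, N_{Y|X}) ∈ DC. Define the modular set function f by f(S) = ∑_{i∈S} ( h*([i]) − h*([i−1]) ), where [i] = {1,…,i} and [0] = ∅. Then f is a nonnegative modular set function with f(∅) = 0, f satisfies all the constraints (f(Y) − f(X) ≤ log₂ N_{Y|X} for every (X, Y, N_{Y|X}) ∈ DC), and f([n]) = h*([n]). Consequently, the maximum of h([n]) over modular functions satisfying the constraints equals the maximum over polymatroids satisfying the constraints. -/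
open Finset

/-- A modular set function: `f S = ∑_{i ∈ S} f {i}`. -/
def IsModular {n : ℕ} (f : Finset (Fin n) → ℝ) : Prop :=
  ∀ S : Finset (Fin n), f S = ∑ i ∈ S, f {i}

/-- The modular function obtained from `h` along the identity variable order:
`f S = ∑_{i ∈ S} (h([i]) − h([i−1]))`, where `[i] = {1,…,i}`. -/
noncomputable def modf {n : ℕ} (h : Finset (Fin n) → ℝ) (S : Finset (Fin n)) : ℝ :=
  ∑ i ∈ S, (h (Finset.Iic i) - h (Finset.Iio i))

/-!
Along the order `1 < ⋯ < n`, the increment `h([i]) − h([i−1])` of a polymatroid is the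
marginal gain of `i` over all its predecessors. If every element of `X` precedes every
element of `Y \ X`, then adding the elements of `Y \ X` to `X` in increasing order, each
gain over the current set is, by submodularity, at least the gain over all predecessors;
summing, the modular function `f` of these increments satisfies
`f(Y) − f(X) ≤ h(Y) − h(X)`. The increments telescope on `[n]`, so `f([n]) = h([n])`.
Since nonnegative modular functions are polymatroids, the two maxima range over the same
set of values.
-/

section Submodular

variable {α : Type*} {h : Finset α → ℝ}

theorem insert_sub_le_insert_sub_of_submodular [DecidableEq α]
    (hsub : ∀ X Y, h (X ∪ Y) + h (X ∩ Y) ≤ h X + h Y)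
    {A B : Finset α} {a : α} (hAB : A ⊆ B) (ha : a ∉ B) :
    h (insert a B) - h B ≤ h (insert a A) - h A := by
  have := hsub (insert a A) B
  rw [insert_union, union_eq_right.mpr hAB, insert_inter_of_notMem ha,
    inter_eq_left.mpr hAB] at this
  linarith

variable [LinearOrder α] [LocallyFiniteOrderBot α]

theorem sum_increment_le_of_submodular
    (hsub : ∀ X Y, h (X ∪ Y) + h (X ∩ Y) ≤ h X + h Y)
    (D X : Finset α) (hXD : ∀ i ∈ D, ∀ x ∈ X, x < i) :
    ∑ i ∈ D, (h (Iic i) - h (Iio i)) ≤ h (X ∪ D) - h X := by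
  induction D using Finset.induction_on_max with
  | empty => simp
  | insert a D hDa ih =>
    have hXD_Iio : X ∪ D ⊆ Iio a := by
      intro x hx
      rcases mem_union.mp hx with hx | hx
      · exact mem_Iio.mpr (hXD a (mem_insert_self a D) x hx)
      · exact mem_Iio.mpr (hDa x hx)
    have hstep := insert_sub_le_insert_sub_of_submodular hsub hXD_Iio notMem_Iio_self
    rw [Iio_insert] at hstep
    rw [sum_insert fun haD => lt_irrefl a (hDa a haD), union_insert]
    linarith [ih fun i hi => hXD i (mem_insert_of_mem hi)]

theorem sum_increment_of_isLowerSet (D : Finset α) (hD : IsLowerSet (D : Set α)) :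
    ∑ i ∈ D, (h (Iic i) - h (Iio i)) = h D - h ∅ := by
  induction D using Finset.induction_on_max with
  | empty => simp
  | insert a D hDa ih =>
    have hD_eq : D = Iio a := by
      ext x
      refine ⟨fun hx => mem_Iio.mpr (hDa x hx), fun hx => ?_⟩
      have hx' : x ∈ insert a D := hD (mem_Iio.mp hx).le (mem_insert_self a D)
      exact (mem_insert.mp hx').resolve_left (mem_Iio.mp hx).ne
    subst hD_eq
    rw [sum_insert notMem_Iio_self, Iio_insert, ih (by simpa using isLowerSet_Iio a)]
    ring

end Submodular

section Modf

variable {n : ℕ} {h : Finset (Fin n) → ℝ}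

theorem isModular_modf (h : Finset (Fin n) → ℝ) : IsModular (modf h) := fun _ =>
  sum_congr rfl fun _ _ => (sum_singleton _ _).symm

theorem modf_empty (h : Finset (Fin n) → ℝ) : modf h ∅ = 0 := sum_empty

theorem modf_nonneg (hmono : ∀ X Y, X ⊆ Y → h X ≤ h Y) (S : Finset (Fin n)) :
    0 ≤ modf h S :=
  sum_nonneg fun _ _ => sub_nonneg.mpr (hmono _ _ Iio_subset_Iic_self)

theorem modf_sub_modf_le (hsub : ∀ X Y, h (X ∪ Y) + h (X ∩ Y) ≤ h X + h Y)
    {X Y : Finset (Fin n)} (hXY : X ⊆ Y) (hcompat : ∀ x ∈ X, ∀ y ∈ Y \ X, x < y) :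
    modf h Y - modf h X ≤ h Y - h X := by
  have hsplit := sum_sdiff (f := fun i => h (Iic i) - h (Iio i)) hXY
  have hgain :=
    sum_increment_le_of_submodular hsub (Y \ X) X fun y hy x hx => hcompat x hx y hy
  rw [union_sdiff_of_subset hXY] at hgain
  unfold modf
  linarith

theorem modf_univ (h0 : h ∅ = 0) : modf h univ = h univ := by
  rw [modf, sum_increment_of_isLowerSet univ (by simpa using isLowerSet_univ), h0, sub_zero]

end Modf

def SatisfiesDC {n : ℕ} (DC : Finset (Finset (Fin n) × Finset (Fin n) × ℕ))
    (f : Finset (Fin n) → ℝ) : Prop :=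
  ∀ c ∈ DC, f c.2.1 - f c.1 ≤ Real.logb 2 (c.2.2 : ℝ)

theorem satisfiesDC_modf {n : ℕ} {DC : Finset (Finset (Fin n) × Finset (Fin n) × ℕ)}
    {h : Finset (Fin n) → ℝ} (hsub : ∀ X Y, h (X ∪ Y) + h (X ∩ Y) ≤ h X + h Y)
    (hDC : ∀ c ∈ DC, c.1 ⊆ c.2.1) (hcompat : ∀ c ∈ DC, ∀ x ∈ c.1, ∀ y ∈ c.2.1 \ c.1, x < y)
    (hsat : SatisfiesDC DC h) : SatisfiesDC DC (modf h) := fun c hc =>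
  (modf_sub_modf_le hsub (hDC c hc) (hcompat c hc)).trans (hsat c hc)

theorem IsModular.isPolymatroid {n : ℕ} {f : Finset (Fin n) → ℝ} (hmod : IsModular f)
    (hnn : ∀ S, 0 ≤ f S) (h0 : f ∅ = 0) : IsPolymatroid f := by
  refine ⟨h0, hnn, fun X Y hXY => ?_, fun X Y => ?_⟩
  · rw [hmod X, hmod Y]
    exact sum_le_sum_of_subset_of_nonneg hXY fun i _ _ => hnn {i}
  · rw [hmod (X ∪ Y), hmod (X ∩ Y), hmod X, hmod Y, sum_union_inter]

/-- **Collapse of the polymatroid bound to a modular bound under acyclic degree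
constraints.** If the identity order is compatible with `DC` and `h*` is a polymatroid
satisfying the constraints, then the modular function `f = modf h*` is nonnegative,
vanishes on `∅`, is modular, satisfies the constraints, and `f([n]) = h*([n])`.
Consequently, the maximum of `h([n])` over modular functions satisfying the
constraints equals the maximum over polymatroids satisfying the constraints. -/
theorem collapse_to_modular
    {n : ℕ} (DC : Finset (Finset (Fin n) × Finset (Fin n) × ℕ))
    (hDCvalid : ∀ c ∈ DC, c.1 ⊂ c.2.1 ∧ 1 ≤ c.2.2)
    (hcompat : ∀ c ∈ DC, ∀ x ∈ c.1, ∀ y ∈ c.2.1 \ c.1, x < y)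
    (h : Finset (Fin n) → ℝ) (hpoly : IsPolymatroid h)
    (hsat : ∀ c ∈ DC, h c.2.1 - h c.1 ≤ Real.logb 2 (c.2.2 : ℝ)) :
    (∀ S, 0 ≤ modf h S) ∧
    modf h ∅ = 0 ∧
    IsModular (modf h) ∧
    (∀ c ∈ DC, modf h c.2.1 - modf h c.1 ≤ Real.logb 2 (c.2.2 : ℝ)) ∧
    modf h Finset.univ = h Finset.univ ∧
    sSup {x : ℝ | ∃ f : Finset (Fin n) → ℝ, IsModular f ∧ (∀ S, 0 ≤ f S) ∧ f ∅ = 0 ∧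
        (∀ c ∈ DC, f c.2.1 - f c.1 ≤ Real.logb 2 (c.2.2 : ℝ)) ∧ x = f Finset.univ}
      = sSup {x : ℝ | ∃ g : Finset (Fin n) → ℝ, IsPolymatroid g ∧
        (∀ c ∈ DC, g c.2.1 - g c.1 ≤ Real.logb 2 (c.2.2 : ℝ)) ∧ x = g Finset.univ} := by
  have hDC : ∀ c ∈ DC, c.1 ⊆ c.2.1 := fun c hc => (hDCvalid c hc).1.subset
  obtain ⟨h0, -, hmono, hsub⟩ := hpoly
  refine ⟨modf_nonneg hmono, modf_empty h, isModular_modf h,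
    satisfiesDC_modf hsub hDC hcompat hsat, modf_univ h0, ?_⟩
  congr 1
  ext x
  constructor
  · rintro ⟨f, hmod, hnn, hf0, hfsat, rfl⟩
    exact ⟨f, hmod.isPolymatroid hnn hf0, hfsat, rfl⟩
  · rintro ⟨g, ⟨hg0, -, hgmono, hgsub⟩, hgsat, rfl⟩
    exact ⟨modf g, isModular_modf g, modf_nonneg hgmono, modf_empty g,
      satisfiesDC_modf hgsub hDC hcompat hgsat, (modf_univ hg0).symm⟩
end

section
/- If some variable is not bound, the polymatroid bound is infinite: Let DC be a set of degree constraints over [n], and let U ⊆ [n] be the (nonempty) set of variables that are not bound under DC; in particular, for every (X, Y, N_{Y|X}) ∈ DC, if X ∩ U = ∅ then Y ∩ U = ∅. Then for every polymatroid h satisfying all constraints of DC and every c > 0, the set function f given by f(S) = h(S) for S ∩ U = ∅ and f(S) = h(S) + c for S ∩ U ≠ ∅ is again a polymatroid satisfying all constraints of DC, with f([n]) = h([n]) + c. Consequently sup { h([n]) : h a polymatroid with h(Y) − h(X) ≤ log₂ N_{Y|X} for all (X,Y,N_{Y|X}) ∈ DC } = +∞. -/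
/-!
Adding `c` to every set that meets `U` adds to `h` the function `c · [S ∩ U ≠ ∅]`, which is
itself a polymatroid (a union meets `U` iff one of its parts does, an intersection only if both
parts do), and sums of polymatroids are polymatroids. No constraint can be violated: it could only
be if its source `X` missed `U` while its target `Y` met it, which closure of the bound variables
rules out. Since `U` is nonempty, `[n]` meets `U`, so lifting the zero polymatroid by arbitrarily
large `c` makes `h([n])` arbitrarily large.
-/

open Finset

variable {n : ℕ}

theorem IsPolymatroid.add {f g : Finset (Fin n) → ℝ} (hf : IsPolymatroid f)
    (hg : IsPolymatroid g) : IsPolymatroid fun S => f S + g S := by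
  obtain ⟨hf0, hfnn, hfmono, hfsub⟩ := hf
  obtain ⟨hg0, hgnn, hgmono, hgsub⟩ := hg
  refine ⟨by simp [hf0, hg0], fun S => add_nonneg (hfnn S) (hgnn S),
    fun X Y hXY => add_le_add (hfmono X Y hXY) (hgmono X Y hXY), fun X Y => ?_⟩
  linarith [hfsub X Y, hgsub X Y]

theorem isPolymatroid_zero : IsPolymatroid fun _ : Finset (Fin n) => (0 : ℝ) :=
  ⟨rfl, fun _ => le_rfl, fun _ _ _ => le_rfl, fun _ _ => by simp⟩

def meetIndicator (U : Finset (Fin n)) (c : ℝ) (S : Finset (Fin n)) : ℝ :=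
  if S ∩ U = ∅ then 0 else c

section meetIndicator

variable (U : Finset (Fin n)) {c : ℝ}

theorem meetIndicator_le (hc : 0 ≤ c) {X Y : Finset (Fin n)} (hXY : X ∩ U = ∅ → Y ∩ U = ∅) :
    meetIndicator U c Y ≤ meetIndicator U c X := by
  unfold meetIndicator
  split_ifs <;> simp_all

theorem add_meetIndicator_sub_le (hc : 0 ≤ c) {h : Finset (Fin n) → ℝ} {X Y : Finset (Fin n)}
    {b : ℝ} (hXY : X ∩ U = ∅ → Y ∩ U = ∅) (hb : h Y - h X ≤ b) :
    h Y + meetIndicator U c Y - (h X + meetIndicator U c X) ≤ b := by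
  linarith [meetIndicator_le U hc hXY]

theorem isPolymatroid_meetIndicator (hc : 0 ≤ c) : IsPolymatroid (meetIndicator U c) := by
  refine ⟨by simp [meetIndicator], fun S => ?_, fun X Y hXY => ?_, fun X Y => ?_⟩
  · unfold meetIndicator
    split_ifs <;> simp [hc]
  · refine meetIndicator_le U hc fun hY => ?_
    rw [← disjoint_iff_inter_eq_empty] at hY ⊢
    exact hY.mono_left hXY
  · simp only [meetIndicator, ← disjoint_iff_inter_eq_empty, disjoint_union_left]
    have hX : Disjoint X U → Disjoint (X ∩ Y) U := Disjoint.mono_left inter_subset_left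
    have hY : Disjoint Y U → Disjoint (X ∩ Y) U := Disjoint.mono_left inter_subset_right
    split_ifs <;> first | linarith | tauto

theorem meetIndicator_univ (hU : U.Nonempty) : meetIndicator U c univ = c := by
  simp [meetIndicator, hU.ne_empty]

theorem ite_inter_eq_empty_eq_add_meetIndicator (h : Finset (Fin n) → ℝ) (c : ℝ) :
    (fun S => if S ∩ U = ∅ then h S else h S + c) = fun S => h S + meetIndicator U c S := by
  funext S
  unfold meetIndicator
  split_ifs <;> simp

end meetIndicator

theorem EReal.sSup_eq_top_of_forall_pos_coe_mem {s : Set EReal}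
    (hs : ∀ x : ℝ, 0 < x → (x : EReal) ∈ s) : sSup s = ⊤ := by
  refine sSup_eq_top.2 fun b hb => ?_
  obtain ⟨x, hbx, -⟩ := EReal.lt_iff_exists_real_btwn.1 hb
  exact ⟨_, hs (max x 1) (by positivity), hbx.trans_le (by exact_mod_cast le_max_left x 1)⟩

theorem Real.logb_natCast_nonneg (b : ℝ) (hb : 1 < b) (N : ℕ) : 0 ≤ Real.logb b N :=
  div_nonneg (Real.log_natCast_nonneg N) (Real.log_nonneg hb.le)

theorem unbounded_when_unbound_variable_general
    {n : ℕ} (DC : Finset (Finset (Fin n) × Finset (Fin n) × ℕ))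
    (U : Finset (Fin n)) (hUne : U.Nonempty)
    (hUclosed : ∀ c ∈ DC, c.1 ∩ U = ∅ → c.2.1 ∩ U = ∅) :
    (∀ h : Finset (Fin n) → ℝ, IsPolymatroid h →
      (∀ c ∈ DC, h c.2.1 - h c.1 ≤ Real.logb 2 (c.2.2 : ℝ)) →
      ∀ c : ℝ, 0 < c →
        IsPolymatroid (fun S => if S ∩ U = ∅ then h S else h S + c) ∧
        (∀ cc ∈ DC,
          (fun S => if S ∩ U = ∅ then h S else h S + c) cc.2.1 -
            (fun S => if S ∩ U = ∅ then h S else h S + c) cc.1 ≤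
              Real.logb 2 (cc.2.2 : ℝ)) ∧
        (fun S => if S ∩ U = ∅ then h S else h S + c) Finset.univ
          = h Finset.univ + c) ∧
    sSup {x : EReal | ∃ h : Finset (Fin n) → ℝ, IsPolymatroid h ∧
        (∀ c ∈ DC, h c.2.1 - h c.1 ≤ Real.logb 2 (c.2.2 : ℝ)) ∧
        x = (h Finset.univ : ℝ)} = (⊤ : EReal) := by
  refine ⟨fun h hh hDC c hc => ?_, EReal.sSup_eq_top_of_forall_pos_coe_mem fun c hc => ?_⟩
  · rw [ite_inter_eq_empty_eq_add_meetIndicator]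
    exact ⟨hh.add (isPolymatroid_meetIndicator U hc.le),
      fun cc hcc => add_meetIndicator_sub_le U hc.le (hUclosed cc hcc) (hDC cc hcc),
      by simp only [meetIndicator_univ U hUne]⟩
  · refine ⟨fun S => 0 + meetIndicator U c S,
      isPolymatroid_zero.add (isPolymatroid_meetIndicator U hc.le),
      fun cc hcc => add_meetIndicator_sub_le U hc.le (h := fun _ => 0) (hUclosed cc hcc) ?_,
      by simp only [meetIndicator_univ U hUne, zero_add]⟩
    simpa using Real.logb_natCast_nonneg 2 one_lt_two cc.2.2

/-- **If some variable is not bound, the polymatroid bound is infinite.** Let `U` be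
the nonempty set of unbound variables, so that for every constraint `(X, Y, N) ∈ DC`,
`X ∩ U = ∅` implies `Y ∩ U = ∅`. Then for every polymatroid `h` satisfying the
constraints and every `c > 0`, the function `f` with `f S = h S` for `S ∩ U = ∅` and
`f S = h S + c` otherwise is again a polymatroid satisfying the constraints, with
`f([n]) = h([n]) + c`. Consequently the polymatroid bound is `+∞`. -/
theorem unbounded_when_unbound_variable
    {n : ℕ} (DC : Finset (Finset (Fin n) × Finset (Fin n) × ℕ))
    (hDCvalid : ∀ c ∈ DC, c.1 ⊂ c.2.1 ∧ 1 ≤ c.2.2)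
    (U : Finset (Fin n)) (hUne : U.Nonempty)
    (hUclosed : ∀ c ∈ DC, c.1 ∩ U = ∅ → c.2.1 ∩ U = ∅) :
    (∀ h : Finset (Fin n) → ℝ, IsPolymatroid h →
      (∀ c ∈ DC, h c.2.1 - h c.1 ≤ Real.logb 2 (c.2.2 : ℝ)) →
      ∀ c : ℝ, 0 < c →
        IsPolymatroid (fun S => if S ∩ U = ∅ then h S else h S + c) ∧
        (∀ cc ∈ DC,
          (fun S => if S ∩ U = ∅ then h S else h S + c) cc.2.1 -
            (fun S => if S ∩ U = ∅ then h S else h S + c) cc.1 ≤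
              Real.logb 2 (cc.2.2 : ℝ)) ∧
        (fun S => if S ∩ U = ∅ then h S else h S + c) Finset.univ
          = h Finset.univ + c) ∧
    sSup {x : EReal | ∃ h : Finset (Fin n) → ℝ, IsPolymatroid h ∧
        (∀ c ∈ DC, h c.2.1 - h c.1 ≤ Real.logb 2 (c.2.2 : ℝ)) ∧
        x = (h Finset.univ : ℝ)} = (⊤ : EReal) :=
  unbounded_when_unbound_variable_general DC U hUne hUclosed
end

section
/- If every variable is bound, the polymatroid bound is finite: Let DC be a set of degree constraints over [n] under which every variable in [n] is bound. Then there is a finite constant M (depending only on DC) such that h([n]) ≤ M for every polymatroid h on [n] satisfying h(Y) − h(X) ≤ log₂ N_{Y|X} for all (X, Y, N_{Y|X}) ∈ DC. -/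
/-!
Starting from `∅`, repeatedly pick a constraint `(X, Y, N)` with `X ⊆ S` but `Y ⊄ S` and pass
to `S ∪ Y`. Submodularity and monotonicity give `h (S ∪ Y) ≤ h S + (h Y - h X) ≤ h S + log₂ N`.
The process only stops at a closed set, which is `[n]` when every variable is bound, and each
constraint is used at most once since afterwards `Y ⊆ S`. Hence `h [n] ≤ ∑_{DC} log₂ N`.
-/

open Finset

variable {α : Type*} [DecidableEq α]

def IsClosedUnder (DC : Finset (Finset α × Finset α × ℕ)) (B : Finset α) : Prop :=
  ∀ c ∈ DC, c.1 ⊆ B → c.2.1 ⊆ B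

lemma union_le_add_sub_of_submodular {h : Finset α → ℝ}
    (hmono : ∀ X Y, X ⊆ Y → h X ≤ h Y) (hsub : ∀ X Y, h (X ∪ Y) + h (X ∩ Y) ≤ h X + h Y)
    {S X Y : Finset α} (hXS : X ⊆ S) (hXY : X ⊆ Y) :
    h (S ∪ Y) ≤ h S + (h Y - h X) := by
  have hX : h X ≤ h (S ∩ Y) := hmono _ _ (subset_inter hXS hXY)
  linarith [hsub S Y]

lemma logb_two_natCast_nonneg (N : ℕ) : 0 ≤ Real.logb 2 (N : ℝ) :=
  div_nonneg (Real.log_natCast_nonneg N) (Real.log_nonneg one_le_two)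

lemma add_sum_filter_not_subset_union_le {DC : Finset (Finset α × Finset α × ℕ)}
    {w : Finset α × Finset α × ℕ → ℝ} (hw : ∀ c, 0 ≤ w c) {S : Finset α}
    {c : Finset α × Finset α × ℕ} (hc : c ∈ DC) (hYS : ¬ c.2.1 ⊆ S) :
    w c + ∑ d ∈ DC with ¬ d.2.1 ⊆ S ∪ c.2.1, w d ≤ ∑ d ∈ DC with ¬ d.2.1 ⊆ S, w d := by
  have hc_mem : c ∈ DC.filter (¬ ·.2.1 ⊆ S) := mem_filter.2 ⟨hc, hYS⟩
  rw [← add_sum_erase _ _ hc_mem]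
  gcongr
  · exact fun d _ _ => hw d
  · intro d hd
    simp only [mem_erase, mem_filter] at hd ⊢
    exact ⟨fun hdc => hd.2 (hdc ▸ subset_union_right), hd.1,
      fun hdS => hd.2 (hdS.trans subset_union_left)⟩

variable [Fintype α]

theorem le_add_sum_logb_of_closed_eq_univ {DC : Finset (Finset α × Finset α × ℕ)}
    (hXY : ∀ c ∈ DC, c.1 ⊆ c.2.1) (hbound : ∀ B, IsClosedUnder DC B → B = univ)
    {h : Finset α → ℝ} (hmono : ∀ X Y, X ⊆ Y → h X ≤ h Y)
    (hsub : ∀ X Y, h (X ∪ Y) + h (X ∩ Y) ≤ h X + h Y)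
    (hcons : ∀ c ∈ DC, h c.2.1 - h c.1 ≤ Real.logb 2 (c.2.2 : ℝ)) (S : Finset α) :
    h univ ≤ h S + ∑ c ∈ DC with ¬ c.2.1 ⊆ S, Real.logb 2 (c.2.2 : ℝ) := by
  by_cases hS : IsClosedUnder DC S
  · simp [hbound S hS]
  obtain ⟨c, hc, hXS, hYS⟩ : ∃ c ∈ DC, c.1 ⊆ S ∧ ¬ c.2.1 ⊆ S := by
    simpa [IsClosedUnder] using hS
  have hlt : S ⊂ S ∪ c.2.1 := Finset.ssubset_iff_subset_ne.2
    ⟨subset_union_left, fun heq => hYS (heq ▸ subset_union_right)⟩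
  have ih := le_add_sum_logb_of_closed_eq_univ hXY hbound hmono hsub hcons (S ∪ c.2.1)
  have hstep : h (S ∪ c.2.1) ≤ h S + Real.logb 2 (c.2.2 : ℝ) := by
    linarith [union_le_add_sub_of_submodular hmono hsub hXS (hXY c hc), hcons c hc]
  linarith [add_sum_filter_not_subset_union_le (fun d => logb_two_natCast_nonneg d.2.2) hc hYS]
termination_by Fintype.card α - #S
decreasing_by
  have := card_lt_card hlt
  have := card_le_univ (S ∪ c.2.1)
  omega

/-- **If every variable is bound, the polymatroid bound is finite.** If every set `B`
that is closed under the constraints (`X ⊆ B → Y ⊆ B` for each `(X, Y, N) ∈ DC`) is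
all of `[n]` — i.e., every variable is bound — then there is a finite constant `M`,
depending only on `DC`, bounding `h([n])` over all polymatroids `h` satisfying the
degree constraints. -/
theorem bounded_when_all_bound
    {n : ℕ} (DC : Finset (Finset (Fin n) × Finset (Fin n) × ℕ))
    (hDCvalid : ∀ c ∈ DC, c.1 ⊂ c.2.1 ∧ 1 ≤ c.2.2)
    (hbound : ∀ B : Finset (Fin n), (∀ c ∈ DC, c.1 ⊆ B → c.2.1 ⊆ B) → B = Finset.univ) :
    ∃ M : ℝ, ∀ h : Finset (Fin n) → ℝ, IsPolymatroid h →
      (∀ c ∈ DC, h c.2.1 - h c.1 ≤ Real.logb 2 (c.2.2 : ℝ)) →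
      h Finset.univ ≤ M := by
  refine ⟨∑ c ∈ DC, Real.logb 2 (c.2.2 : ℝ), fun h ⟨h_empty, _, hmono, hsub⟩ hcons => ?_⟩
  calc h univ ≤ h ∅ + ∑ c ∈ DC with ¬ c.2.1 ⊆ ∅, Real.logb 2 (c.2.2 : ℝ) :=
        le_add_sum_logb_of_closed_eq_univ (fun c hc => (hDCvalid c hc).1.subset) hbound
          hmono hsub hcons ∅
    _ ≤ ∑ c ∈ DC, Real.logb 2 (c.2.2 : ℝ) := by
        rw [h_empty, zero_add]
        exact sum_le_sum_of_subset_of_nonneg (filter_subset _ _)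
          fun c _ _ => logb_two_natCast_nonneg c.2.2
end

section
/- Cycle-breaking preserves boundedness: Let DC be a set of degree constraints over [n] under which every variable in [n] is bound, and suppose the constraint dependency graph G_DC contains a directed cycle C. Then there exist a constraint (X, Y, N_{Y|X}) ∈ DC and a vertex y ∈ (Y∖X) lying on C, with some x ∈ X such that (x, y) is an edge of C, such that in the modified constraint set DC' obtained from DC by replacing (X, Y, N_{Y|X}) with (X, Y∖{y}, N_{Y|X}) (dropping it if Y∖{y} = X), every variable in [n] is still bound. -/
/-!
Let `S₀ = ∅ ⊆ S₁ ⊆ …` be the stages of the bound-variable derivation, `S_{t+1}` adding `Y`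
for every constraint with `X ⊆ S_t`; since every variable is bound, each variable appears at
some stage. Let `t₀` be the first stage containing a vertex of the cycle, let `y` be such a vertex,
and let `(X, Y, N)` be the constraint of the cycle edge `(x, y)`. The constraint cannot fire
before stage `t₀`, since `x ∈ X` is on the cycle, and from stage `t₀` on `y` is already
derived. So removing `y` from `Y` leaves every stage, hence every bound variable, unchanged.
-/

open Finset

namespace DegreeConstraint

variable {α β : Type*}

def Closed (DC : Finset (Finset α × Finset α × β)) (B : Finset α) : Prop :=
  ∀ c ∈ DC, c.1 ⊆ B → c.2.1 ⊆ B

def AllBound [Fintype α] (DC : Finset (Finset α × Finset α × β)) : Prop :=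
  ∀ B, Closed DC B → B = univ

variable [DecidableEq α]

def breakAt [DecidableEq β] (DC : Finset (Finset α × Finset α × β))
    (c : Finset α × Finset α × β) (y : α) : Finset (Finset α × Finset α × β) :=
  DC.erase c ∪ if c.2.1.erase y = c.1 then ∅ else {(c.1, c.2.1.erase y, c.2.2)}

def closureStep (DC : Finset (Finset α × Finset α × β)) (B : Finset α) : Finset α :=
  B ∪ (DC.filter (·.1 ⊆ B)).biUnion (·.2.1)

def stage (DC : Finset (Finset α × Finset α × β)) (t : ℕ) : Finset α :=
  (closureStep DC)^[t] ∅

variable {DC : Finset (Finset α × Finset α × β)} {B S : Finset α}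

theorem mem_closureStep {v : α} :
    v ∈ closureStep DC S ↔ v ∈ S ∨ ∃ d ∈ DC, d.1 ⊆ S ∧ v ∈ d.2.1 := by
  simp [closureStep, and_assoc]

theorem stage_succ (t : ℕ) : stage DC (t + 1) = closureStep DC (stage DC t) :=
  Function.iterate_succ_apply' _ _ _

theorem monotone_stage (DC : Finset (Finset α × Finset α × β)) : Monotone (stage DC) :=
  monotone_nat_of_le_succ fun t => by rw [stage_succ]; exact subset_union_left

theorem exists_subset_stage {X : Finset α} (hX : ∀ x ∈ X, ∃ t, x ∈ stage DC t) :
    ∃ t, X ⊆ stage DC t := by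
  have hdir : Directed (· ⊆ ·) fun t => (stage DC t : Set α) :=
    Monotone.directed_le fun _ _ hst => coe_subset.2 (monotone_stage DC hst)
  simpa using hdir.exists_mem_subset_of_finset_subset_biUnion (s := X) fun x hx => by
    simpa using hX x hx

theorem exists_mem_stage [Fintype α] (hDC : AllBound DC) (v : α) : ∃ t, v ∈ stage DC t := by
  classical
  have hclosed : Closed DC (univ.filter fun v => ∃ t, v ∈ stage DC t) := by
    intro c hc hcX v hv
    obtain ⟨t, ht⟩ := exists_subset_stage fun x hx => (mem_filter.1 (hcX hx)).2
    refine mem_filter.2 ⟨mem_univ v, t + 1, ?_⟩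
    rw [stage_succ, mem_closureStep]
    exact Or.inr ⟨c, hc, ht, hv⟩
  have hv : v ∈ univ.filter fun v => ∃ t, v ∈ stage DC t := by
    rw [hDC _ hclosed]
    exact mem_univ v
  exact (mem_filter.1 hv).2

section breakAt

variable [DecidableEq β] {c : Finset α × Finset α × β} {y : α}

theorem Closed.subset_of_breakAt (hB : Closed (breakAt DC c y) B) {d : Finset α × Finset α × β}
    (hd : d ∈ DC) (hdc : d ≠ c) (hdB : d.1 ⊆ B) : d.2.1 ⊆ B :=
  hB d (mem_union_left _ (mem_erase.2 ⟨hdc, hd⟩)) hdB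

theorem Closed.erase_subset_of_breakAt (hB : Closed (breakAt DC c y) B) (hcB : c.1 ⊆ B) :
    c.2.1.erase y ⊆ B := by
  by_cases htriv : c.2.1.erase y = c.1
  · exact htriv ▸ hcB
  · refine hB (c.1, c.2.1.erase y, c.2.2) (mem_union_right _ ?_) hcB
    rw [if_neg htriv]
    exact mem_singleton_self _

theorem closureStep_subset_of_closed_breakAt (hB : Closed (breakAt DC c y) B) (hSB : S ⊆ B)
    (hy : c.1 ⊆ S → y ∈ S) : closureStep DC S ⊆ B := by
  intro v hv
  obtain hvS | ⟨d, hd, hdS, hvd⟩ := mem_closureStep.1 hv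
  · exact hSB hvS
  obtain rfl | hdc := eq_or_ne d c
  · by_cases hvy : v = y
    · exact hSB (hvy ▸ hy hdS)
    · exact hB.erase_subset_of_breakAt (hdS.trans hSB) (mem_erase.2 ⟨hvy, hvd⟩)
  · exact hB.subset_of_breakAt hd hdc (hdS.trans hSB) hvd

theorem allBound_breakAt [Fintype α] (hDC : AllBound DC)
    (hy : ∀ t, c.1 ⊆ stage DC t → y ∈ stage DC t) : AllBound (breakAt DC c y) := by
  intro B hB
  have hstage : ∀ t, stage DC t ⊆ B := by
    intro t
    induction t with
    | zero => exact empty_subset B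
    | succ t ih => rw [stage_succ]; exact closureStep_subset_of_closed_breakAt hB ih (hy t)
  exact eq_univ_of_forall fun v => (exists_mem_stage hDC v).elim fun t ht => hstage t ht

end breakAt

end DegreeConstraint

open DegreeConstraint in
theorem cycle_breaking_general
    {n : ℕ} (DC : Finset (Finset (Fin n) × Finset (Fin n) × ℕ))
    (hbound : ∀ B : Finset (Fin n), (∀ c ∈ DC, c.1 ⊆ B → c.2.1 ⊆ B) → B = Finset.univ)
    (k : ℕ) (C : Fin (k + 1) → Fin n)
    (hCedge : ∀ i : Fin (k + 1), ∃ c ∈ DC, C i ∈ c.1 ∧ C (i + 1) ∈ c.2.1 \ c.1) :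
    ∃ c ∈ DC, ∃ y ∈ c.2.1 \ c.1,
      (∃ x ∈ c.1, ∃ i : Fin (k + 1), C i = x ∧ C (i + 1) = y) ∧
      (∀ B : Finset (Fin n),
        (∀ c' ∈ (DC.erase c) ∪
            (if c.2.1.erase y = c.1 then (∅ : Finset (Finset (Fin n) × Finset (Fin n) × ℕ))
             else {(c.1, c.2.1.erase y, c.2.2)}),
          c'.1 ⊆ B → c'.2.1 ⊆ B) → B = Finset.univ) := by
  have hcycle : ∃ t, ∃ i, C i ∈ stage DC t :=
    (exists_mem_stage hbound (C 0)).imp fun _ h => ⟨0, h⟩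
  obtain ⟨j, hj⟩ := Nat.find_spec hcycle
  obtain ⟨c, hc, hx, hy⟩ := hCedge (j - 1)
  rw [sub_add_cancel] at hy
  refine ⟨c, hc, C j, hy, ⟨C (j - 1), hx, j - 1, rfl, by rw [sub_add_cancel]⟩, ?_⟩
  refine allBound_breakAt hbound fun t hct => ?_
  have hfirst : Nat.find hcycle ≤ t := Nat.find_min' hcycle ⟨j - 1, hct hx⟩
  exact monotone_stage DC hfirst hj

/-- **Cycle-breaking preserves boundedness.** Suppose every variable in `[n]` is bound
under `DC` (every constraint-closed set `B` equals `[n]`), and the constraint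
dependency graph contains a directed cycle `C` (given by an injective
`C : Fin (k+1) → Fin n`, each consecutive pair — cyclically — being an edge of `G_DC`).
Then there are a constraint `(X, Y, N) ∈ DC`, a vertex `y ∈ Y∖X` on `C`, and some
`x ∈ X` with `(x, y)` an edge of `C`, such that after replacing `(X, Y, N)` by
`(X, Y∖{y}, N)` (dropping it if `Y∖{y} = X`), every variable in `[n]` is still bound. -/
theorem cycle_breaking
    {n : ℕ} (DC : Finset (Finset (Fin n) × Finset (Fin n) × ℕ))
    (hDCvalid : ∀ c ∈ DC, c.1 ⊂ c.2.1 ∧ 1 ≤ c.2.2)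
    (hbound : ∀ B : Finset (Fin n), (∀ c ∈ DC, c.1 ⊆ B → c.2.1 ⊆ B) → B = Finset.univ)
    (k : ℕ) (C : Fin (k + 1) → Fin n) (hCinj : Function.Injective C)
    (hCedge : ∀ i : Fin (k + 1), ∃ c ∈ DC, C i ∈ c.1 ∧ C (i + 1) ∈ c.2.1 \ c.1) :
    ∃ c ∈ DC, ∃ y ∈ c.2.1 \ c.1,
      (∃ x ∈ c.1, ∃ i : Fin (k + 1), C i = x ∧ C (i + 1) = y) ∧
      (∀ B : Finset (Fin n),
        (∀ c' ∈ (DC.erase c) ∪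
            (if c.2.1.erase y = c.1 then (∅ : Finset (Finset (Fin n) × Finset (Fin n) × ℕ))
             else {(c.1, c.2.1.erase y, c.2.2)}),
          c'.1 ⊆ B → c'.2.1 ⊆ B) → B = Finset.univ) :=
  cycle_breaking_general DC hbound k C hCedge
end

section
/- Analysis of the heavy/light triangle algorithm: Assume |R|, |S|, |T| ≥ 1 and set θ = √(|R|·|S| / |T|). For a ∈ Dom(A) let deg_R(a) = |{b : (a,b) ∈ R}|, and partition R into R^heavy = {(a,b) ∈ R : deg_R(a) > θ} and R^light = R ∖ R^heavy. Then the join sizes satisfy |{(a,b,c) : (a,b) ∈ R^heavy, (b,c) ∈ S}| ≤ √(|R|·|S|·|T|) and |{(a,b,c) : (a,b) ∈ R^light, (a,c) ∈ T}| ≤ √(|R|·|S|·|T|). -/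
open Finset

/-!
A heavy key has more than `θ` partners in `R`, so there are at most `|R| / θ` heavy keys, and
each of them joins with at most `|S|` tuples of `S`: `|R^heavy ⋈ S| ≤ |R| |S| / θ`. A light key
has at most `θ` partners in `R`, so every tuple of `T` extends in at most `θ` ways:
`|R^light ⋈ T| ≤ θ |T|`. The value of `θ` balances the two bounds at `√(|R| |S| |T|)`.
-/

section HeavyLight

variable {α β γ : Type*} [DecidableEq α]

noncomputable def heavyPart (R : Finset (α × β)) (θ : ℝ) : Finset (α × β) :=
  R.filter fun p => θ < ((R.filter fun q => q.1 = p.1).card : ℝ)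

theorem card_image_fst_heavyPart_mul_le (R : Finset (α × β)) (θ : ℝ) :
    (((heavyPart R θ).image Prod.fst).card : ℝ) * θ ≤ R.card := by
  set H := (heavyPart R θ).image Prod.fst
  have hdeg : ∀ a ∈ H, θ ≤ ((R.filter fun q => q.1 = a).card : ℝ) := by
    rintro a ha
    obtain ⟨p, hp, rfl⟩ := mem_image.1 ha
    exact (mem_filter.1 hp).2.le
  calc (H.card : ℝ) * θ = ∑ _a ∈ H, θ := by rw [sum_const, nsmul_eq_mul]
    _ ≤ ∑ a ∈ H, ((R.filter fun q => q.1 = a).card : ℝ) := sum_le_sum hdeg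
    _ = ((R.filter fun q => q.1 ∈ H).card : ℝ) := by
      rw [← sum_card_fiberwise_eq_card_filter, Nat.cast_sum]
    _ ≤ R.card := by exact_mod_cast card_filter_le _ _

theorem card_filter_fst_sdiff_heavyPart_le [DecidableEq β] (R : Finset (α × β)) {θ : ℝ}
    (hθ : 0 ≤ θ) (a : α) : (((R \ heavyPart R θ).filter fun q => q.1 = a).card : ℝ) ≤ θ := by
  by_cases ha : ∃ p ∈ R \ heavyPart R θ, p.1 = a
  · obtain ⟨p, hp, rfl⟩ := ha
    obtain ⟨hpR, hpLight⟩ := mem_sdiff.1 hp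
    have hdeg : ((R.filter fun q => q.1 = p.1).card : ℝ) ≤ θ :=
      not_lt.1 fun h => hpLight (mem_filter.2 ⟨hpR, h⟩)
    exact le_trans (by exact_mod_cast card_le_card (filter_subset_filter _ sdiff_subset)) hdeg
  · push Not at ha
    rw [filter_false_of_mem ha, card_empty, Nat.cast_zero]
    exact hθ

theorem card_join_snd_le [DecidableEq β] (X : Finset (α × β)) (S : Finset (β × γ)) :
    ((X ×ˢ S).filter fun p => p.1.2 = p.2.1).card ≤ (X.image Prod.fst).card * S.card := by
  rw [← card_product]
  refine card_le_card_of_injOn (fun p => (p.1.1, p.2)) ?_ ?_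
  · intro p hp
    obtain ⟨hpX, hpS⟩ := mem_product.1 (mem_filter.1 hp).1
    exact mem_product.2 ⟨mem_image_of_mem _ hpX, hpS⟩
  · rintro ⟨⟨a, b⟩, s⟩ hp ⟨⟨a', b'⟩, s'⟩ hp' h
    obtain ⟨rfl, rfl⟩ := Prod.mk.inj h
    simp_all

theorem card_join_fst_le [DecidableEq γ] (X : Finset (α × β)) (T : Finset (α × γ)) {θ : ℝ}
    (hX : ∀ a, ((X.filter fun q => q.1 = a).card : ℝ) ≤ θ) :
    (((X ×ˢ T).filter fun p => p.1.1 = p.2.1).card : ℝ) ≤ θ * T.card := by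
  set J := (X ×ˢ T).filter fun p => p.1.1 = p.2.1
  have hmaps : (J : Set ((α × β) × (α × γ))).MapsTo Prod.snd T :=
    fun p hp => (mem_product.1 (mem_filter.1 hp).1).2
  have hfiber : ∀ t ∈ T, ((J.filter fun p => p.2 = t).card : ℝ) ≤ θ := by
    intro t _
    refine le_trans ?_ (hX t.1)
    refine mod_cast card_le_card_of_injOn Prod.fst (fun p hp => ?_) (fun p hp q hq h => ?_)
    · obtain ⟨hpJ, rfl⟩ := mem_filter.1 hp
      obtain ⟨hpXT, hpa⟩ := mem_filter.1 hpJ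
      exact mem_filter.2 ⟨(mem_product.1 hpXT).1, hpa⟩
    · exact Prod.ext h ((mem_filter.1 hp).2.trans (mem_filter.1 hq).2.symm)
  calc (J.card : ℝ) = ∑ t ∈ T, ((J.filter fun p => p.2 = t).card : ℝ) := by
        rw [card_eq_sum_card_fiberwise hmaps, Nat.cast_sum]
    _ ≤ ∑ _t ∈ T, θ := sum_le_sum hfiber
    _ = θ * T.card := by rw [sum_const, nsmul_eq_mul, mul_comm]

end HeavyLight

theorem Real.sqrt_div_mul_eq_sqrt_mul (x : ℝ) {t : ℝ} (ht : 0 ≤ t) : √(x / t) * t = √(x * t) := by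
  rw [Real.sqrt_div' x ht, Real.sqrt_mul' x ht, div_mul_eq_mul_div, mul_div_assoc, Real.div_sqrt]

theorem Real.sqrt_div_mul_sqrt_mul {x t : ℝ} (hx : 0 ≤ x) (ht : 0 < t) :
    √(x / t) * √(x * t) = x := by
  rw [← Real.sqrt_mul (div_nonneg hx ht.le), show x / t * (x * t) = x * x by field_simp,
    Real.sqrt_mul_self hx]

/-- **Analysis of the heavy/light triangle algorithm.** With `θ = √(|R|·|S|/|T|)`,
`R^heavy = {(a,b) ∈ R : deg_R(a) > θ}` and `R^light = R ∖ R^heavy`, both join sizes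
`|R^heavy ⋈ S|` and `|R^light ⋈ T|` are at most `√(|R|·|S|·|T|)`. -/
theorem heavy_light_triangle_analysis
    {A B C : Type*} [DecidableEq A] [DecidableEq B] [DecidableEq C]
    (R : Finset (A × B)) (S : Finset (B × C)) (T : Finset (A × C))
    (hR : 1 ≤ R.card) (hS : 1 ≤ S.card) (hT : 1 ≤ T.card) :
    let θ : ℝ := Real.sqrt ((R.card : ℝ) * (S.card : ℝ) / (T.card : ℝ))
    let Rheavy := R.filter (fun p => θ < ((R.filter (fun q => q.1 = p.1)).card : ℝ))
    let Rlight := R \ Rheavy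
    ((((Rheavy ×ˢ S).filter (fun p => p.1.2 = p.2.1)).card : ℝ)
        ≤ Real.sqrt ((R.card : ℝ) * (S.card : ℝ) * (T.card : ℝ))) ∧
    ((((Rlight ×ˢ T).filter (fun p => p.1.1 = p.2.1)).card : ℝ)
        ≤ Real.sqrt ((R.card : ℝ) * (S.card : ℝ) * (T.card : ℝ))) := by
  intro θ Rheavy Rlight
  have hR0 : (0 : ℝ) < R.card := by exact_mod_cast hR
  have hS0 : (0 : ℝ) < S.card := by exact_mod_cast hS
  have hT0 : (0 : ℝ) < T.card := by exact_mod_cast hT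
  have hθ : 0 < θ := Real.sqrt_pos.2 (by positivity)
  constructor
  · refine le_of_mul_le_mul_left ?_ hθ
    calc θ * (((Rheavy ×ˢ S).filter fun p => p.1.2 = p.2.1).card : ℝ)
        ≤ θ * ((Rheavy.image Prod.fst).card * S.card) := by
          gcongr; exact_mod_cast card_join_snd_le Rheavy S
      _ = (Rheavy.image Prod.fst).card * θ * S.card := by ring
      _ ≤ R.card * S.card := by gcongr; exact card_image_fst_heavyPart_mul_le R θ
      _ = θ * Real.sqrt (R.card * S.card * T.card) :=
          (Real.sqrt_div_mul_sqrt_mul (by positivity) hT0).symm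
  · calc (((Rlight ×ˢ T).filter fun p => p.1.1 = p.2.1).card : ℝ)
        ≤ θ * T.card := card_join_fst_le Rlight T (card_filter_fst_sdiff_heavyPart_le R hθ.le)
      _ = Real.sqrt (R.card * S.card * T.card) := Real.sqrt_div_mul_eq_sqrt_mul _ hT0.le
end
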